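/- arXiv:math/0611942 — 10 statements merged into one kernel-verified Lean document; each statement's English description precedes it below -/
import Mathlib

section
/- Let F be a field of characteristic zero, let ℒ be the Lie algebra of Block type over F, and let a, b ∈ F. Then the free F-vector space with basis {v_{k,l} | k,l ∈ ℤ} admits an ℒ-module structure A_{a,b} determined by L_{i,j}·v_{k,l} = ((j+1)(a+k) + (b−1−l)i) v_{i+k,j+l} for all i,j,k,l ∈ ℤ. -/
attribute [local instance 100] LieRing.ofAssociativeRing

/-- Let `F` be a field of characteristic zero and let `L` be the Lie
algebra of Block type over `F`, i.e. a Lie algebra with basis `{L_{i,j} | i,j ∈ ℤ}` and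
bracket `[L_{i,j}, L_{k,l}] = ((j+1)k − (l+1)i) L_{i+k,j+l}`.  For any `a b ∈ F`, the free
`F`-vector space with basis `{v_{k,l} | k,l ∈ ℤ}` carries an `L`-module structure (given by
a representation `ρ`) with `L_{i,j} · v_{k,l} = ((j+1)(a+k) + (b−1−l)i) v_{i+k,j+l}`. -/
theorem block_module_Aab_exists
    (F : Type*) [Field F] [CharZero F]
    (L : Type*) [LieRing L] [LieAlgebra F L]
    (E : Module.Basis (ℤ × ℤ) F L)
    (hE : ∀ i j k l : ℤ, ⁅E (i, j), E (k, l)⁆ =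
      (((j : F) + 1) * (k : F) - ((l : F) + 1) * (i : F)) • E (i + k, j + l))
    (a b : F) :
    ∃ ρ : L →ₗ⁅F⁆ Module.End F ((ℤ × ℤ) →₀ F),
      ∀ i j k l : ℤ,
        ρ (E (i, j)) (Finsupp.single (k, l) 1) =
          (((j : F) + 1) * (a + (k : F)) + (b - 1 - (l : F)) * (i : F)) •
            Finsupp.single (i + k, j + l) (1 : F) := by
  classical
  set c : ℤ → ℤ → ℤ → ℤ → F := fun i j k l =>
    ((j : F) + 1) * (a + (k : F)) + (b - 1 - (l : F)) * (i : F) with hc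
  set T : (ℤ × ℤ) → Module.End F ((ℤ × ℤ) →₀ F) := fun p =>
    Finsupp.lsum F fun q => c p.1 p.2 q.1 q.2 • Finsupp.lsingle (p.1 + q.1, p.2 + q.2)
    with hTdef
  have hT : ∀ (i j k l : ℤ) (r : F), T (i, j) (Finsupp.single (k, l) r) =
      (r * c i j k l) • Finsupp.single (i + k, j + l) (1 : F) := by
    intro i j k l r
    simp [hTdef, Finsupp.smul_single, mul_comm]
  set ρ₀ : L →ₗ[F] Module.End F ((ℤ × ℤ) →₀ F) := Module.Basis.constr E F T with hρ₀
  have hρ : ∀ p, ρ₀ (E p) = T p := fun p => Module.Basis.constr_basis E F T p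
  have hbasis : ∀ p q : ℤ × ℤ, ρ₀ ⁅E p, E q⁆ = ⁅ρ₀ (E p), ρ₀ (E q)⁆ := by
    rintro ⟨i, j⟩ ⟨k, l⟩
    rw [hE i j k l, map_smul, hρ, hρ, hρ]
    apply Finsupp.lhom_ext
    rintro ⟨m, n⟩ r
    show _ = (T (i, j) * T (k, l) - T (k, l) * T (i, j)) (Finsupp.single (m, n) r)
    simp only [LinearMap.smul_apply, LinearMap.sub_apply, Module.End.mul_apply, hT,
      map_smul, smul_smul, mul_one]
    rw [show k + (i + m) = i + k + m by ring, show l + (j + n) = j + l + n by ring,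
      show i + (k + m) = i + k + m by ring, show j + (l + n) = j + l + n by ring,
      ← sub_smul]
    congr 1
    simp only [hc]
    push_cast
    ring
  have key : ∀ x y : L, ρ₀ ⁅x, y⁆ = ⁅ρ₀ x, ρ₀ y⁆ := by
    have hB : (LinearMap.mk₂ F (fun x y : L => ρ₀ ⁅x, y⁆)
        (by intro x₁ x₂ y; show ρ₀ ⁅x₁ + x₂, y⁆ = ρ₀ ⁅x₁, y⁆ + ρ₀ ⁅x₂, y⁆; rw [add_lie, map_add])
        (by intro s x y; show ρ₀ ⁅s • x, y⁆ = s • ρ₀ ⁅x, y⁆; rw [smul_lie, map_smul])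
        (by intro x y₁ y₂; show ρ₀ ⁅x, y₁ + y₂⁆ = ρ₀ ⁅x, y₁⁆ + ρ₀ ⁅x, y₂⁆; rw [lie_add, map_add])
        (by intro s x y; show ρ₀ ⁅x, s • y⁆ = s • ρ₀ ⁅x, y⁆; rw [lie_smul, map_smul])) =
        (LinearMap.mk₂ F (fun x y : L => ⁅ρ₀ x, ρ₀ y⁆)
        (by intro x₁ x₂ y
            show ρ₀ (x₁+x₂) * ρ₀ y - ρ₀ y * ρ₀ (x₁+x₂) =
              (ρ₀ x₁ * ρ₀ y - ρ₀ y * ρ₀ x₁) + (ρ₀ x₂ * ρ₀ y - ρ₀ y * ρ₀ x₂)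
            rw [map_add]; noncomm_ring)
        (by intro s x y
            show ρ₀ (s • x) * ρ₀ y - ρ₀ y * ρ₀ (s • x) = s • (ρ₀ x * ρ₀ y - ρ₀ y * ρ₀ x)
            rw [map_smul]; rw [smul_mul_assoc, mul_smul_comm]; module)
        (by intro x y₁ y₂
            show ρ₀ x * ρ₀ (y₁+y₂) - ρ₀ (y₁+y₂) * ρ₀ x =
              (ρ₀ x * ρ₀ y₁ - ρ₀ y₁ * ρ₀ x) + (ρ₀ x * ρ₀ y₂ - ρ₀ y₂ * ρ₀ x)
            rw [map_add]; noncomm_ring)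
        (by intro s x y
            show ρ₀ x * ρ₀ (s • y) - ρ₀ (s • y) * ρ₀ x = s • (ρ₀ x * ρ₀ y - ρ₀ y * ρ₀ x)
            rw [map_smul]; rw [smul_mul_assoc, mul_smul_comm]; module)) := by
      apply Module.Basis.ext E
      intro p
      apply Module.Basis.ext E
      intro q
      exact hbasis p q
    intro x y
    exact LinearMap.congr_fun (LinearMap.congr_fun hB x) y
  refine ⟨{ toLinearMap := ρ₀, map_lie' := fun {x y} => key x y }, ?_⟩
  intro i j k l
  show ρ₀ (E (i, j)) (Finsupp.single (k, l) 1) = _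
  rw [hρ, hT]
  simp [hc]
end

section
/- Let F be a field of characteristic zero, let ℒ be the Lie algebra of Block type over F, and let a, b ∈ F. If a is not an integer (i.e., a ≠ n·1_F for every n ∈ ℤ), then the ℒ-module A_{a,b} is irreducible: its only ℒ-submodules are 0 and A_{a,b} itself. -/
set_option linter.unusedSectionVars false
set_option maxHeartbeats 1000000

open scoped Classical

section aux

variable {F : Type*} [Field F] [CharZero F]
variable {L : Type*} [LieRing L] [LieAlgebra F L]
variable {V : Type*} [AddCommGroup V] [Module F V] [LieRingModule L V] [LieModule F L V]

lemma repr_linear_diag (v : Module.Basis (ℤ × ℤ) F V) (T : V →ₗ[F] V) (f : ℤ × ℤ → F)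
    (hT : ∀ p, T (v p) = f p • v p) (w : V) (q : ℤ × ℤ) :
    v.repr (T w) q = f q * v.repr w q := by
  have h : (Finsupp.lapply q : ((ℤ × ℤ) →₀ F) →ₗ[F] F) ∘ₗ (v.repr.toLinearMap ∘ₗ T)
      = f q • ((Finsupp.lapply q : ((ℤ × ℤ) →₀ F) →ₗ[F] F) ∘ₗ v.repr.toLinearMap) := by
    apply v.ext
    intro p
    simp only [LinearMap.comp_apply, LinearEquiv.coe_coe, hT p, map_smul, Module.Basis.repr_self,
      Finsupp.lapply_apply, LinearMap.smul_apply, Finsupp.smul_apply, Finsupp.single_apply,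
      smul_eq_mul]
    by_cases hpq : p = q <;> simp [hpq]
  simpa using LinearMap.congr_fun h w

lemma filter_mem (v : Module.Basis (ℤ × ℤ) F V) (N : LieSubmodule F L V) (T : V →ₗ[F] V)
    (f : ℤ × ℤ → F) (hT : ∀ p, T (v p) = f p • v p) (hTN : ∀ u ∈ N, T u ∈ N) (lam : F) :
    ∀ n : ℕ, ∀ w ∈ N, ((v.repr w).support.filter (fun p => f p ≠ lam)).card ≤ n →
      v.repr.symm ((v.repr w).filter (fun p => f p = lam)) ∈ N := by
  intro n
  induction n with
  | zero =>
    intro w hw hcard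
    have hall : ∀ q ∈ (v.repr w).support, f q = lam := by
      intro q hq
      by_contra hfq
      have : q ∈ (v.repr w).support.filter (fun p => f p ≠ lam) := Finset.mem_filter.2 ⟨hq, hfq⟩
      have := Finset.card_pos.2 ⟨q, this⟩
      omega
    have hfe : (v.repr w).filter (fun p => f p = lam) = v.repr w := by
      ext q
      rw [Finsupp.filter_apply]
      split_ifs with h
      · rfl
      · by_contra hq
        exact h (hall q (Finsupp.mem_support_iff.2 fun h0 => hq h0.symm))
    rw [hfe]
    simpa using hw
  | succ n ih =>
    intro w hw hcard
    by_cases hall : ∀ q ∈ (v.repr w).support, f q = lam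
    · have hfe : (v.repr w).filter (fun p => f p = lam) = v.repr w := by
        ext q
        rw [Finsupp.filter_apply]
        split_ifs with h
        · rfl
        · by_contra hq
          exact h (hall q (Finsupp.mem_support_iff.2 fun h0 => hq h0.symm))
      rw [hfe]
      simpa using hw
    · push_neg at hall
      obtain ⟨p0, hp0s, hp0⟩ := hall
      set μ := f p0 with hμ
      set w' := T w - μ • w with hw'def
      have hw' : w' ∈ N := N.sub_mem (hTN w hw) (N.smul_mem μ hw)
      have hrepr' : ∀ q, v.repr w' q = (f q - μ) * v.repr w q := by
        intro q
        rw [hw'def, map_sub, map_smul, Finsupp.sub_apply, Finsupp.smul_apply,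
          repr_linear_diag v T f hT, smul_eq_mul]
        ring
      have hsub : (v.repr w').support.filter (fun p => f p ≠ lam) ⊆
          ((v.repr w).support.filter (fun p => f p ≠ lam)).erase p0 := by
        intro q hq
        obtain ⟨hqs, hqf⟩ := Finset.mem_filter.1 hq
        have hcq : v.repr w' q ≠ 0 := Finsupp.mem_support_iff.1 hqs
        rw [hrepr' q] at hcq
        have hq0 : v.repr w q ≠ 0 := fun h => hcq (by rw [h, mul_zero])
        have hqp0 : q ≠ p0 := by
          rintro rfl
          exact hcq (by rw [← hμ, sub_self, zero_mul])
        exact Finset.mem_erase.2 ⟨hqp0, Finset.mem_filter.2 ⟨Finsupp.mem_support_iff.2 hq0, hqf⟩⟩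
      have hp0f : p0 ∈ (v.repr w).support.filter (fun p => f p ≠ lam) :=
        Finset.mem_filter.2 ⟨hp0s, hp0⟩
      have hcard' : ((v.repr w').support.filter (fun p => f p ≠ lam)).card ≤ n := by
        have h1 := Finset.card_le_card hsub
        have h2 := Finset.card_erase_of_mem hp0f
        have h3 := Finset.card_pos.2 ⟨p0, hp0f⟩
        omega
      have hIH := ih w' hw' hcard'
      have hfilter : (v.repr w').filter (fun p => f p = lam)
          = (lam - μ) • ((v.repr w).filter (fun p => f p = lam)) := by
        ext q
        rw [Finsupp.smul_apply, Finsupp.filter_apply, Finsupp.filter_apply]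
        split_ifs with h
        · rw [hrepr' q, h, smul_eq_mul]
        · rw [smul_zero]
      rw [hfilter, map_smul] at hIH
      have hne : lam - μ ≠ 0 := sub_ne_zero.2 fun h => hp0 h.symm
      have := N.smul_mem (lam - μ)⁻¹ hIH
      rwa [smul_smul, inv_mul_cancel₀ hne, one_smul] at this

end aux

/-- Let `F` be a field of characteristic zero, `L` the Block type Lie
algebra over `F` and `a b ∈ F`.  If `a` is not an integer (i.e. `a ≠ n·1_F` for every
`n : ℤ`), then the `L`-module `A_{a,b}` (with basis `{v_{k,l}}` and
`L_{i,j}·v_{k,l} = ((j+1)(a+k) + (b−1−l)i) v_{i+k,j+l}`) is irreducible: its only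
`L`-submodules are `⊥` and `⊤`. -/
theorem block_module_Aab_irreducible_of_a_not_int
    (F : Type*) [Field F] [CharZero F]
    (L : Type*) [LieRing L] [LieAlgebra F L]
    (E : Module.Basis (ℤ × ℤ) F L)
    (hE : ∀ i j k l : ℤ, ⁅E (i, j), E (k, l)⁆ =
      (((j : F) + 1) * (k : F) - ((l : F) + 1) * (i : F)) • E (i + k, j + l))
    (V : Type*) [AddCommGroup V] [Module F V] [LieRingModule L V] [LieModule F L V]
    (v : Module.Basis (ℤ × ℤ) F V) (a b : F)
    (hv : ∀ i j k l : ℤ, ⁅E (i, j), v (k, l)⁆ =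
      (((j : F) + 1) * (a + (k : F)) + (b - 1 - (l : F)) * (i : F)) • v (i + k, j + l))
    (ha : ∀ n : ℤ, a ≠ (n : F)) :
    ∀ N : LieSubmodule F L V, N = ⊥ ∨ N = ⊤ := by
  intro N
  by_cases hbot : N = ⊥
  · exact Or.inl hbot
  right
  -- a + k is never zero
  have hAk : ∀ k : ℤ, a + (k : F) ≠ 0 := by
    intro k h
    exact ha (-k) (by push_cast; linear_combination h)
  -- obtain a nonzero element of N
  obtain ⟨w, hwN, hw0⟩ : ∃ w, w ∈ N ∧ w ≠ 0 := by
    by_contra hno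
    push_neg at hno
    exact hbot (LieSubmodule.eq_bot_iff N |>.2 hno)
  -- the three diagonal operators
  set Ta : V →ₗ[F] V := LieModule.toEnd F L V (E (0, 0)) with hTadef
  set T0 : V →ₗ[F] V :=
    (LieModule.toEnd F L V (E (-1, 0))) ∘ₗ (LieModule.toEnd F L V (E (1, 0))) with hT0def
  set T1 : V →ₗ[F] V :=
    (LieModule.toEnd F L V (E (-1, -1))) ∘ₗ (LieModule.toEnd F L V (E (1, 1))) with hT1def
  set fa : ℤ × ℤ → F := fun p => a + (p.1 : F) with hfadef
  set f0 : ℤ × ℤ → F := fun p =>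
    (a + (p.1 : F) + (b - 1 - (p.2 : F))) * (a + (p.1 : F) + 1 - (b - 1 - (p.2 : F))) with hf0def
  set f1 : ℤ × ℤ → F := fun p =>
    (2 * (a + (p.1 : F)) + (b - 1 - (p.2 : F))) * ((p.2 : F) + 2 - b) with hf1def
  have hTa : ∀ p : ℤ × ℤ, Ta (v p) = fa p • v p := by
    rintro ⟨k, l⟩
    have h := hv 0 0 k l
    rw [hTadef, LieModule.toEnd_apply_apply, h]
    push_cast
    norm_num
    rfl
  have hT0 : ∀ p : ℤ × ℤ, T0 (v p) = f0 p • v p := by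
    rintro ⟨k, l⟩
    have h1 := hv 1 0 k l
    have h2 := hv (-1) 0 (1 + k) (0 + l)
    rw [hT0def, LinearMap.comp_apply, LieModule.toEnd_apply_apply,
      LieModule.toEnd_apply_apply, h1, lie_smul, h2, smul_smul,
      show (-1 + (1 + k), 0 + (0 + l)) = ((k, l) : ℤ × ℤ) by rw [neg_add_cancel_left, zero_add,
        zero_add]]
    congr 1
    push_cast
    ring
  have hT1 : ∀ p : ℤ × ℤ, T1 (v p) = f1 p • v p := by
    rintro ⟨k, l⟩
    have h1 := hv 1 1 k l
    have h2 := hv (-1) (-1) (1 + k) (1 + l)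
    rw [hT1def, LinearMap.comp_apply, LieModule.toEnd_apply_apply,
      LieModule.toEnd_apply_apply, h1, lie_smul, h2, smul_smul,
      show (-1 + (1 + k), -1 + (1 + l)) = ((k, l) : ℤ × ℤ) by
        rw [neg_add_cancel_left, neg_add_cancel_left]]
    congr 1
    push_cast
    ring
  have hTaN : ∀ u ∈ N, Ta u ∈ N := fun u hu => N.lie_mem hu
  have hT0N : ∀ u ∈ N, T0 u ∈ N := fun u hu => N.lie_mem (N.lie_mem hu)
  have hT1N : ∀ u ∈ N, T1 u ∈ N := fun u hu => N.lie_mem (N.lie_mem hu)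
  -- pick a point in the support
  have hrw : v.repr w ≠ 0 := fun h => hw0 (by simpa using congrArg v.repr.symm h)
  obtain ⟨p0, hp0⟩ := Finsupp.support_nonempty_iff.2 hrw
  -- key injectivity
  have hkey : ∀ q : ℤ × ℤ, fa q = fa p0 → f0 q = f0 p0 → f1 q = f1 p0 → q = p0 := by
    rintro ⟨k, l⟩ h_a h_0 h_1
    obtain ⟨k0, l0⟩ := p0
    have hk : k = k0 := by
      have h_a' : a + (k : F) = a + (k0 : F) := by simpa [hfadef] using h_a
      exact_mod_cast add_left_cancel h_a'
    subst hk
    set A := a + (k : F) with hA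
    set x := b - 1 - (l : F) with hx
    set x0 := b - 1 - (l0 : F) with hx0
    have e0 : (x - x0) * (1 - x - x0) = 0 := by
      have : (x - x0) * (1 - x - x0) = (A + x) * (A + 1 - x) - (A + x0) * (A + 1 - x0) := by ring
      rw [this]
      have h0' : (A + x) * (A + 1 - x) = (A + x0) * (A + 1 - x0) := by
        simpa [hf0def, hA, hx, hx0] using h_0
      rw [h0', sub_self]
    have e1 : (x - x0) * (1 - x - x0 - 2 * A) = 0 := by
      have : (x - x0) * (1 - x - x0 - 2 * A)
          = (2 * A + x) * (1 - x) - (2 * A + x0) * (1 - x0) := by ring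
      rw [this]
      have h1' : (2 * A + x) * ((l : F) + 2 - b) = (2 * A + x0) * ((l0 : F) + 2 - b) := by
        simpa [hf1def, hA, hx, hx0] using h_1
      have hxl : (l : F) + 2 - b = 1 - x := by rw [hx]; ring
      have hxl0 : (l0 : F) + 2 - b = 1 - x0 := by rw [hx0]; ring
      rw [hxl, hxl0] at h1'
      rw [h1', sub_self]
    have hxx : x = x0 := by
      by_contra hxx
      have hne : x - x0 ≠ 0 := sub_ne_zero.2 hxx
      have h10 : 1 - x - x0 = 0 := by
        rcases mul_eq_zero.1 e0 with h | h
        · exact absurd h hne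
        · exact h
      have h20 : 1 - x - x0 - 2 * A = 0 := by
        rcases mul_eq_zero.1 e1 with h | h
        · exact absurd h hne
        · exact h
      have hA0 : A = 0 := by
        have h2A : 2 * A = 0 := by linear_combination h10 - h20
        linear_combination h2A / 2
      exact hAk k (hA ▸ hA0 ▸ rfl)
    have hl : l = l0 := by
      have : (l : F) = (l0 : F) := by
        have hxx' : b - 1 - (l : F) = b - 1 - (l0 : F) := by rw [← hx, ← hx0, hxx]
        linear_combination -hxx'
      exact_mod_cast this
    rw [hl]
  -- extract v p0 from w
  have h1 := filter_mem v N Ta fa hTa hTaN (fa p0)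
    ((v.repr w).support.filter (fun p => fa p ≠ fa p0)).card w hwN le_rfl
  set w1 := v.repr.symm ((v.repr w).filter (fun p => fa p = fa p0)) with hw1def
  have hrw1 : v.repr w1 = (v.repr w).filter (fun p => fa p = fa p0) := by
    rw [hw1def, LinearEquiv.apply_symm_apply]
  have h2 := filter_mem v N T0 f0 hT0 hT0N (f0 p0)
    ((v.repr w1).support.filter (fun p => f0 p ≠ f0 p0)).card w1 h1 le_rfl
  set w2 := v.repr.symm ((v.repr w1).filter (fun p => f0 p = f0 p0)) with hw2def
  have hrw2 : v.repr w2 = (v.repr w1).filter (fun p => f0 p = f0 p0) := by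
    rw [hw2def, LinearEquiv.apply_symm_apply]
  have h3 := filter_mem v N T1 f1 hT1 hT1N (f1 p0)
    ((v.repr w2).support.filter (fun p => f1 p ≠ f1 p0)).card w2 h2 le_rfl
  have hsingle : (((v.repr w).filter (fun p => fa p = fa p0)).filter
      (fun p => f0 p = f0 p0)).filter (fun p => f1 p = f1 p0)
      = Finsupp.single p0 (v.repr w p0) := by
    ext q
    by_cases hq : q = p0
    · subst hq
      simp [Finsupp.filter_apply]
    · have hs : Finsupp.single p0 (v.repr w p0) q = 0 := by
        rw [Finsupp.single_apply, if_neg (fun h => hq h.symm)]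
      rw [hs, Finsupp.filter_apply]
      split_ifs with u1
      · rw [Finsupp.filter_apply]
        split_ifs with u2
        · rw [Finsupp.filter_apply]
          split_ifs with u3
          · exact absurd (hkey q u3 u2 u1) hq
          · rfl
        · rfl
      · rfl
  rw [hrw2, hrw1, hsingle, Module.Basis.repr_symm_single] at h3
  have hc0 : v.repr w p0 ≠ 0 := Finsupp.mem_support_iff.1 hp0
  have hvp0 : v p0 ∈ N := by
    have := N.smul_mem (v.repr w p0)⁻¹ h3
    rwa [smul_smul, inv_mul_cancel₀ hc0, one_smul] at this
  -- step in l
  have step_l : ∀ k l j : ℤ, j ≠ -1 → v (k, l) ∈ N → v (k, l + j) ∈ N := by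
    intro k l j hj hm
    have hb : (((j : F) + 1) * (a + (k : F)) + (b - 1 - (l : F)) * ((0 : ℤ) : F))
        • v (0 + k, j + l) ∈ N := by
      rw [← hv 0 j k l]; exact N.lie_mem hm
    have hc : ((j : F) + 1) * (a + (k : F)) + (b - 1 - (l : F)) * ((0 : ℤ) : F)
        = ((j : F) + 1) * (a + (k : F)) := by push_cast; ring
    rw [hc] at hb
    have hcne : ((j : F) + 1) * (a + (k : F)) ≠ 0 := by
      apply mul_ne_zero _ (hAk k)
      intro h0
      apply hj
      have : (j : F) = ((-1 : ℤ) : F) := by push_cast; linear_combination h0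
      exact_mod_cast this
    have := N.smul_mem (((j : F) + 1) * (a + (k : F)))⁻¹ hb
    rw [smul_smul, inv_mul_cancel₀ hcne, one_smul] at this
    rwa [show (0 + k, j + l) = ((k, l + j) : ℤ × ℤ) by rw [zero_add, add_comm]] at this
  have col : ∀ k l l' : ℤ, v (k, l) ∈ N → v (k, l') ∈ N := by
    intro k l l' hm
    by_cases h : l' = l - 1
    · have h1 : v (k, l + 1) ∈ N := step_l k l 1 (by norm_num) hm
      have h2 : v (k, (l + 1) + (-2)) ∈ N := step_l k (l + 1) (-2) (by norm_num) h1
      rwa [show (l + 1) + (-2) = l' by omega] at h2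
    · have := step_l k l (l' - l) (by omega) hm
      rwa [show l + (l' - l) = l' by omega] at this
  -- step in k
  have step_k : ∀ i k : ℤ, i = 1 ∨ i = -1 → (∀ l, v (k, l) ∈ N) → ∀ l, v (k + i, l) ∈ N := by
    intro i k hi hall
    have key : ∃ l0 : ℤ, a + (k : F) + (b - 1 - (l0 : F)) * (i : F) ≠ 0 := by
      by_contra hno
      push_neg at hno
      have h0 := hno 0
      have h1 := hno 1
      push_cast at h0 h1
      have : (i : F) = 0 := by linear_combination h0 - h1
      rcases hi with rfl | rfl <;> norm_num at this
    obtain ⟨l0, hl0⟩ := key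
    have hb : ((((0 : ℤ) : F) + 1) * (a + (k : F)) + (b - 1 - (l0 : F)) * (i : F))
        • v (i + k, 0 + l0) ∈ N := by
      rw [← hv i 0 k l0]; exact N.lie_mem (hall l0)
    have hc : (((0 : ℤ) : F) + 1) * (a + (k : F)) + (b - 1 - (l0 : F)) * (i : F)
        = a + (k : F) + (b - 1 - (l0 : F)) * (i : F) := by push_cast; ring
    rw [hc] at hb
    have := N.smul_mem (a + (k : F) + (b - 1 - (l0 : F)) * (i : F))⁻¹ hb
    rw [smul_smul, inv_mul_cancel₀ hl0, one_smul] at this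
    rw [show (i + k, 0 + l0) = ((k + i, l0) : ℤ × ℤ) by rw [add_comm i k, zero_add]] at this
    exact fun l => col (k + i) l0 l this
  -- all basis vectors are in N
  have base : ∀ l, v (p0.1, l) ∈ N := by
    intro l
    refine col p0.1 p0.2 l ?_
    rw [Prod.mk.eta]
    exact hvp0
  have ind : ∀ d : ℤ, ∀ l, v (p0.1 + d, l) ∈ N := by
    intro d
    induction d using Int.induction_on with
    | zero => simpa using base
    | succ n ih =>
      intro l
      have h2 := step_k 1 (p0.1 + n) (Or.inl rfl) ih l
      rwa [show p0.1 + ((n : ℤ) + 1) = (p0.1 + (n : ℤ)) + 1 by ring]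
    | pred n ih =>
      intro l
      have h2 := step_k (-1) (p0.1 + (-(n : ℤ))) (Or.inr rfl) ih l
      rwa [show p0.1 + (-(n : ℤ) - 1) = (p0.1 + (-(n : ℤ))) + (-1) by ring]
  have hall : ∀ k l : ℤ, v (k, l) ∈ N := by
    intro k l
    have := ind (k - p0.1) l
    rwa [show p0.1 + (k - p0.1) = k by ring] at this
  rw [eq_top_iff]
  intro m _
  have hspan : m ∈ Submodule.span F (Set.range v) := by rw [Module.Basis.span_eq]; trivial
  have hle : Submodule.span F (Set.range v) ≤ (N : Submodule F V) := by
    rw [Submodule.span_le]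
    rintro _ ⟨⟨k, l⟩, rfl⟩
    exact hall k l
  exact hle hspan
end

section
/- Let F be a field of characteristic zero, let ℒ be the Lie algebra of Block type over F, and let a, b ∈ F. If a is an integer (a = m·1_F for some m ∈ ℤ) and b is not an integer (b ≠ n·1_F for every n ∈ ℤ), then the ℒ-module A_{a,b} is irreducible: its only ℒ-submodules are 0 and A_{a,b} itself. -/
section Helpers

variable {F V : Type*} [Field F] [AddCommGroup V] [Module F V]

/-- If `T` sends each basis vector `v p` to `g p • v (σ p)` for a permutation `σ`,
then coordinates of `T x` are computed from those of `x`. -/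
lemma block_repr_shift (v : Module.Basis (ℤ × ℤ) F V) (T : V →ₗ[F] V)
    (σ : Equiv.Perm (ℤ × ℤ)) (g : ℤ × ℤ → F)
    (hT : ∀ p, T (v p) = g p • v (σ p)) (x : V) (q : ℤ × ℤ) :
    v.repr (T x) q = g (σ.symm q) * v.repr x (σ.symm q) := by
  have h1 : (Finsupp.lapply q ∘ₗ (v.repr : V →ₗ[F] (ℤ × ℤ) →₀ F) ∘ₗ T)
      = g (σ.symm q) • (Finsupp.lapply (σ.symm q) ∘ₗ (v.repr : V →ₗ[F] (ℤ × ℤ) →₀ F)) := by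
    apply v.ext
    intro p
    simp only [LinearMap.comp_apply, LinearMap.smul_apply, hT p, map_smul,
      Module.Basis.repr_self, Finsupp.lapply_apply, Finsupp.smul_apply, Finsupp.single_apply,
      smul_eq_mul]
    by_cases hpq : p = σ.symm q
    · subst hpq
      simp
    · have h2 : ¬ (σ p = q) := fun h => hpq (by rw [← h]; simp)
      simp [hpq, h2]
  have := LinearMap.congr_fun h1 x
  simpa using this

/-- Annihilation trick: given a diagonal(izable) operator `T` preserving `P`, we can
multiply the coordinates of `x` by `∏ (μ q - c)` while staying in `P`. -/
lemma block_isolate (v : Module.Basis (ℤ × ℤ) F V) (P : Submodule F V) (T : V →ₗ[F] V)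
    (hTP : ∀ y ∈ P, T y ∈ P) (μ : ℤ × ℤ → F)
    (hT : ∀ p, T (v p) = μ p • v p) (S : Finset F) (x : V) (hx : x ∈ P) :
    ∃ u ∈ P, ∀ q, v.repr u q = (S.prod fun c => μ q - c) * v.repr x q := by
  classical
  induction S using Finset.induction with
  | empty => exact ⟨x, hx, fun q => by simp⟩
  | @insert c S hc ih =>
    obtain ⟨u, huP, hu⟩ := ih
    refine ⟨T u - c • u, P.sub_mem (hTP u huP) (P.smul_mem c huP), fun q => ?_⟩
    have h1 : v.repr (T u) q = μ q * v.repr u q := by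
      have := block_repr_shift v T (Equiv.refl _) μ (by simpa using hT) u q
      simpa using this
    rw [Finset.prod_insert hc]
    simp only [map_sub, map_smul, Finsupp.sub_apply, Finsupp.smul_apply, h1, hu q,
      smul_eq_mul]
    ring

end Helpers

/-- Let `F` be a field of characteristic zero, `L` the Block type Lie
algebra over `F` and `a b ∈ F`.  If `a` is an integer and `b` is not an integer, then the
`L`-module `A_{a,b}` is irreducible: its only `L`-submodules are `⊥` and `⊤`. -/
theorem block_module_Aab_irreducible_of_a_int_b_not_int
    (F : Type*) [Field F] [CharZero F]
    (L : Type*) [LieRing L] [LieAlgebra F L]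
    (E : Module.Basis (ℤ × ℤ) F L)
    (hE : ∀ i j k l : ℤ, ⁅E (i, j), E (k, l)⁆ =
      (((j : F) + 1) * (k : F) - ((l : F) + 1) * (i : F)) • E (i + k, j + l))
    (V : Type*) [AddCommGroup V] [Module F V] [LieRingModule L V] [LieModule F L V]
    (v : Module.Basis (ℤ × ℤ) F V) (a b : F)
    (hv : ∀ i j k l : ℤ, ⁅E (i, j), v (k, l)⁆ =
      (((j : F) + 1) * (a + (k : F)) + (b - 1 - (l : F)) * (i : F)) • v (i + k, j + l))
    (ha : ∃ m : ℤ, a = (m : F)) (hb : ∀ n : ℤ, b ≠ (n : F)) :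
    ∀ N : LieSubmodule F L V, N = ⊥ ∨ N = ⊤ := by
  classical
  intro N
  rcases eq_or_ne N ⊥ with hbot | hbot
  · left; exact hbot
  right
  obtain ⟨m, rfl⟩ := ha
  -- a nonzero element of N
  obtain ⟨w, hwN, hw0⟩ : ∃ w ∈ N, w ≠ 0 := by
    by_contra h
    push_neg at h
    exact hbot ((LieSubmodule.eq_bot_iff N).mpr h)
  set NS : Submodule F V := (N : Submodule F V) with hNS
  have hNmem : ∀ x : V, x ∈ NS ↔ x ∈ N := fun x => LieSubmodule.mem_toSubmodule N
  -- the operators given by bracketing with basis elements of L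
  set Bop : ℤ → ℤ → (V →ₗ[F] V) := fun i j => LieModule.toEnd F L V (E (i, j)) with hBopdef
  have hBop : ∀ (i j : ℤ) (p : ℤ × ℤ), Bop i j (v p) =
      ((((j : F)) + 1) * ((m : F) + (p.1 : F)) + (b - 1 - (p.2 : F)) * (i : F))
        • v (((i, j) : ℤ × ℤ) + p) := by
    intro i j p
    have h := hv i j p.1 p.2
    rw [hBopdef]
    simp only [LieModule.toEnd_apply_apply]
    have hp : ((i, j) : ℤ × ℤ) + p = (i + p.1, j + p.2) := by
      cases p; simp [Prod.ext_iff]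
    rw [hp]
    simpa using h
  have hBN : ∀ (i j : ℤ), ∀ y ∈ NS, Bop i j y ∈ NS := by
    intro i j y hy
    rw [hNmem] at hy ⊢
    have : ⁅E (i, j), y⁆ ∈ N := N.lie_mem hy
    simpa [hBopdef, LieModule.toEnd_apply_apply] using this
  have hBrepr : ∀ (i j : ℤ) (x : V) (q : ℤ × ℤ), v.repr (Bop i j x) q =
      ((((j : F)) + 1) * ((m : F) + ((-i + q.1 : ℤ) : F)) + (b - 1 - ((-j + q.2 : ℤ) : F)) * (i : F))
        * v.repr x (-i + q.1, -j + q.2) := by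
    intro i j x q
    have h := block_repr_shift v (Bop i j) (Equiv.addLeft ((i, j) : ℤ × ℤ))
      (fun p => (((j : F)) + 1) * ((m : F) + (p.1 : F)) + (b - 1 - (p.2 : F)) * (i : F))
      (fun p => by simpa using hBop i j p) x q
    have hsymm : (Equiv.addLeft ((i, j) : ℤ × ℤ)).symm q = (-i + q.1, -j + q.2) := by
      rw [Equiv.symm_apply_eq]
      cases q
      simp [Prod.ext_iff]
    rw [h, hsymm]
  -- a point in the support of w
  obtain ⟨p₀, hp₀⟩ : ∃ p, v.repr w p ≠ 0 := by
    have h0 : v.repr w ≠ 0 := fun h => hw0 (by simpa using congrArg v.repr.symm h)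
    exact Finsupp.ne_iff.mp h0 |>.imp (fun p hp => by simpa using hp)
  -- Step A : isolate a single value of the first index
  have hD : ∀ p : ℤ × ℤ, Bop 0 0 (v p) = ((m : F) + p.1) • v p := by
    intro p
    rw [hBop 0 0 p]
    have : ((0, 0) : ℤ × ℤ) + p = p := by simp
    rw [this]
    norm_num
  set μ₁ : ℤ × ℤ → F := fun p => (m : F) + p.1 with hμ₁def
  have hμ₁inj : ∀ q r : ℤ × ℤ, μ₁ q = μ₁ r → q.1 = r.1 := by
    intro q r h
    simpa [hμ₁def] using h
  obtain ⟨w₁, hw₁N, hw₁⟩ := block_isolate v NS (Bop 0 0) (hBN 0 0) μ₁ hD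
    (((v.repr w).support.image μ₁).erase (μ₁ p₀)) w ((hNmem w).mpr hwN)
  have hw₁p₀ : v.repr w₁ p₀ ≠ 0 := by
    rw [hw₁ p₀]
    refine mul_ne_zero (Finset.prod_ne_zero_iff.mpr fun c hc => ?_) hp₀
    exact sub_ne_zero_of_ne (Ne.symm (Finset.mem_erase.mp hc).1)
  have hw₁supp : ∀ q, v.repr w₁ q ≠ 0 → q.1 = p₀.1 := by
    intro q hq
    have hwq : v.repr w q ≠ 0 := fun h => hq (by rw [hw₁ q, h, mul_zero])
    by_contra hne
    apply hq
    rw [hw₁ q]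
    have hmem : μ₁ q ∈ ((v.repr w).support.image μ₁).erase (μ₁ p₀) :=
      Finset.mem_erase.mpr ⟨fun h => hne (hμ₁inj q p₀ h),
        Finset.mem_image_of_mem μ₁ (Finsupp.mem_support_iff.mpr hwq)⟩
    rw [Finset.prod_eq_zero hmem (sub_self _), zero_mul]
  -- Step B : make sure m + k ≠ 0
  have key : ∃ (w₂ : V) (p₁ : ℤ × ℤ), w₂ ∈ NS ∧ ((m : F) + p₁.1 ≠ 0) ∧
      v.repr w₂ p₁ ≠ 0 ∧ ∀ q, v.repr w₂ q ≠ 0 → q.1 = p₁.1 := by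
    by_cases hc : (m : F) + p₀.1 = 0
    · refine ⟨Bop 1 0 w₁, ((1, 0) : ℤ × ℤ) + p₀, hBN 1 0 w₁ hw₁N, ?_, ?_, ?_⟩
      · have : (((1, 0) : ℤ × ℤ) + p₀).1 = 1 + p₀.1 := by simp
        rw [this]
        push_cast
        intro h
        rw [show (m : F) + (1 + p₀.1) = ((m : F) + p₀.1) + 1 by ring, hc] at h
        simpa using h
      · rw [hBrepr 1 0 w₁ (((1, 0) : ℤ × ℤ) + p₀)]
        have h1 : (-(1 : ℤ) + (((1, 0) : ℤ × ℤ) + p₀).1, -(0 : ℤ) + (((1, 0) : ℤ × ℤ) + p₀).2)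
            = p₀ := by cases p₀; simp [Prod.ext_iff] <;> omega
        have h2 : (-(1 : ℤ) + (((1, 0) : ℤ × ℤ) + p₀).1 : ℤ) = p₀.1 := by simp
        have h3 : (-(0 : ℤ) + (((1, 0) : ℤ × ℤ) + p₀).2 : ℤ) = p₀.2 := by simp
        rw [h1, h2, h3]
        refine mul_ne_zero ?_ hw₁p₀
        intro h
        apply hb (1 + p₀.2 - m - p₀.1)
        push_cast at h ⊢
        linear_combination h
      · intro q hq
        rw [hBrepr 1 0 w₁ q] at hq
        have hq' : v.repr w₁ (-1 + q.1, -0 + q.2) ≠ 0 := fun h => hq (by rw [h, mul_zero])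
        have := hw₁supp _ hq'
        simp only [] at this
        have : (((1, 0) : ℤ × ℤ) + p₀).1 = 1 + p₀.1 := by simp
        rw [this]
        omega
    · exact ⟨w₁, p₀, hw₁N, hc, hw₁p₀, hw₁supp⟩
  obtain ⟨w₂, p₁, hw₂N, hcne, hw₂p₁, hw₂supp⟩ := key
  -- Step C : isolate a single basis vector, using the diagonal operator U
  set U : V →ₗ[F] V := Bop (-1) 0 ∘ₗ Bop 1 0 - Bop (-1) (-1) ∘ₗ Bop 1 1 with hUdef
  set μ₂ : ℤ × ℤ → F := fun p =>
    2 * ((m : F) + p.1) * (b - 1 - p.2) + ((m : F) + p.1) ^ 2 - ((m : F) + p.1) with hμ₂def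
  have hU : ∀ p : ℤ × ℤ, U (v p) = μ₂ p • v p := by
    intro p
    obtain ⟨k, l⟩ := p
    rw [hUdef]
    simp only [LinearMap.sub_apply, LinearMap.comp_apply]
    rw [hBop 1 0 (k, l), hBop 1 1 (k, l), map_smul, map_smul,
      hBop (-1) 0 _, hBop (-1) (-1) _]
    have e1 : ((-1, 0) : ℤ × ℤ) + (((1, 0) : ℤ × ℤ) + (k, l)) = (k, l) := by
      simp [Prod.ext_iff]
    have e2 : ((-1, -1) : ℤ × ℤ) + (((1, 1) : ℤ × ℤ) + (k, l)) = (k, l) := by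
      simp [Prod.ext_iff]
    rw [e1, e2, smul_smul, smul_smul, ← sub_smul]
    congr 1
    have e3 : ((((1, 0) : ℤ × ℤ) + (k, l)).1 : F) = 1 + (k : F) := by push_cast [Prod.ext_iff]; simp
    have e4 : ((((1, 0) : ℤ × ℤ) + (k, l)).2 : F) = (l : F) := by push_cast [Prod.ext_iff]; simp
    have e5 : ((((1, 1) : ℤ × ℤ) + (k, l)).1 : F) = 1 + (k : F) := by push_cast [Prod.ext_iff]; simp
    have e6 : ((((1, 1) : ℤ × ℤ) + (k, l)).2 : F) = 1 + (l : F) := by push_cast [Prod.ext_iff]; simp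
    rw [e3, e4, e5, e6, hμ₂def]
    push_cast
    ring
  have hUN : ∀ y ∈ NS, U y ∈ NS := by
    intro y hy
    rw [hUdef]
    simp only [LinearMap.sub_apply, LinearMap.comp_apply]
    exact NS.sub_mem (hBN (-1) 0 _ (hBN 1 0 _ hy)) (hBN (-1) (-1) _ (hBN 1 1 _ hy))
  obtain ⟨w₃, hw₃N, hw₃⟩ := block_isolate v NS U hUN μ₂ hU
    (((v.repr w₂).support.image μ₂).erase (μ₂ p₁)) w₂ hw₂N
  have hw₃p₁ : v.repr w₃ p₁ ≠ 0 := by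
    rw [hw₃ p₁]
    refine mul_ne_zero (Finset.prod_ne_zero_iff.mpr fun c hc => ?_) hw₂p₁
    exact sub_ne_zero_of_ne (Ne.symm (Finset.mem_erase.mp hc).1)
  have hw₃single : ∀ q, q ≠ p₁ → v.repr w₃ q = 0 := by
    intro q hqne
    by_contra hq
    have hw₂q : v.repr w₂ q ≠ 0 := fun h => hq (by rw [hw₃ q, h, mul_zero])
    have hq1 : q.1 = p₁.1 := hw₂supp q hw₂q
    have hμeq : μ₂ q = μ₂ p₁ := by
      by_contra hne
      apply hq
      rw [hw₃ q]
      have hmem : μ₂ q ∈ ((v.repr w₂).support.image μ₂).erase (μ₂ p₁) :=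
        Finset.mem_erase.mpr ⟨hne, Finset.mem_image_of_mem μ₂ (Finsupp.mem_support_iff.mpr hw₂q)⟩
      rw [Finset.prod_eq_zero hmem (sub_self _), zero_mul]
    apply hqne
    have hq2 : q.2 = p₁.2 := by
      simp only [hμ₂def] at hμeq
      rw [hq1] at hμeq
      have hcancel : (b - 1 - (q.2 : F)) = (b - 1 - (p₁.2 : F)) := by
        have h2c : (2 : F) * ((m : F) + p₁.1) ≠ 0 := mul_ne_zero two_ne_zero hcne
        apply mul_left_cancel₀ h2c
        linear_combination hμeq
      have : (q.2 : F) = (p₁.2 : F) := by linear_combination -hcancel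
      exact_mod_cast this
    exact Prod.ext hq1 hq2
  -- w₃ is a nonzero multiple of v p₁, hence v p₁ ∈ N
  have hvp₁ : v p₁ ∈ NS := by
    have hrepr : v.repr w₃ = Finsupp.single p₁ (v.repr w₃ p₁) := by
      ext q
      rcases eq_or_ne q p₁ with rfl | hne
      · simp
      · rw [Finsupp.single_apply, if_neg (fun h => hne h.symm), hw₃single q hne]
    have hw₃eq : w₃ = v.repr w₃ p₁ • v p₁ := by
      apply v.repr.injective
      rw [map_smul, Module.Basis.repr_self, Finsupp.smul_single, smul_eq_mul, mul_one]
      exact hrepr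
    obtain ⟨c, hc0, hceq⟩ : ∃ c : F, c ≠ 0 ∧ w₃ = c • v p₁ := ⟨_, hw₃p₁, hw₃eq⟩
    rw [hceq] at hw₃N
    have := NS.smul_mem c⁻¹ hw₃N
    rwa [smul_smul, inv_mul_cancel₀ hc0, one_smul] at this
  -- Step D : propagate to all basis vectors
  have move : ∀ (i j k l : ℤ) (q : ℤ × ℤ), q = (i + k, j + l) →
      ((((j : F)) + 1) * ((m : F) + (k : F)) + (b - 1 - (l : F)) * (i : F)) ≠ 0 →
      v (k, l) ∈ NS → v q ∈ NS := by
    intro i j k l q hq hc hm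
    have h1 : ⁅E (i, j), v (k, l)⁆ ∈ N := N.lie_mem ((hNmem _).mp hm)
    rw [hv i j k l] at h1
    have h2 : (((j : F) + 1) * ((m : F) + (k : F)) + (b - 1 - (l : F)) * (i : F))
        • v (i + k, j + l) ∈ NS := (hNmem _).mpr h1
    have h3 := NS.smul_mem ((((j : F) + 1) * ((m : F) + (k : F)) + (b - 1 - (l : F)) * (i : F))⁻¹) h2
    rw [smul_smul, inv_mul_cancel₀ hc, one_smul] at h3
    rwa [hq]
  have stepR : ∀ k l : ℤ, v (k, l) ∈ NS → v (k + 1, l) ∈ NS := by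
    intro k l h
    refine move 1 0 k l (k + 1, l) (by rw [Prod.ext_iff]; constructor <;> simp <;> omega) ?_ h
    intro hc
    apply hb (1 + l - m - k)
    push_cast at hc ⊢
    linear_combination hc
  have stepL : ∀ k l : ℤ, v (k, l) ∈ NS → v (k - 1, l) ∈ NS := by
    intro k l h
    refine move (-1) 0 k l (k - 1, l) (by rw [Prod.ext_iff]; constructor <;> simp <;> omega) ?_ h
    intro hc
    apply hb (m + k + 1 + l)
    push_cast at hc ⊢
    linear_combination -hc
  have stepUR : ∀ k l : ℤ, v (k, l) ∈ NS → v (k + 1, l + 1) ∈ NS := by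
    intro k l h
    refine move 1 1 k l (k + 1, l + 1) (by rw [Prod.ext_iff]; constructor <;> simp <;> omega) ?_ h
    intro hc
    apply hb (1 + l - 2 * m - 2 * k)
    push_cast at hc ⊢
    linear_combination hc
  have stepDR : ∀ k l : ℤ, v (k, l) ∈ NS → v (k + 1, l - 1) ∈ NS := by
    intro k l h
    refine move 1 (-1) k l (k + 1, l - 1) (by rw [Prod.ext_iff]; constructor <;> simp <;> omega) ?_ h
    intro hc
    apply hb (1 + l)
    push_cast at hc ⊢
    linear_combination hc
  have stepU : ∀ k l : ℤ, v (k, l) ∈ NS → v (k, l + 1) ∈ NS := by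
    intro k l h
    have := stepL (k + 1) (l + 1) (stepUR k l h)
    simpa using this
  have stepD : ∀ k l : ℤ, v (k, l) ∈ NS → v (k, l - 1) ∈ NS := by
    intro k l h
    have := stepL (k + 1) (l - 1) (stepDR k l h)
    simpa using this
  have hcol : ∀ l : ℤ, v (p₁.1, l) ∈ NS := by
    intro l
    refine Int.inductionOn' l p₁.2 ?_ (fun k _ h => stepU _ _ h) (fun k _ h => stepD _ _ h)
    simpa using hvp₁
  have hall : ∀ p : ℤ × ℤ, v p ∈ NS := by
    rintro ⟨k, l⟩
    exact Int.inductionOn' k p₁.1 (hcol l) (fun k _ h => stepR _ _ h) (fun k _ h => stepL _ _ h)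
  have htot : ∀ x : V, x ∈ NS := by
    intro x
    rw [← Module.Basis.linearCombination_repr v x, Finsupp.linearCombination_apply, Finsupp.sum]
    exact Submodule.sum_mem _ (fun p _ => NS.smul_mem _ (hall p))
  rw [← LieSubmodule.toSubmodule_eq_top]
  exact Submodule.eq_top_iff'.mpr htot
end

section
/- Let F be a field of characteristic zero, let ℒ be the Lie algebra of Block type over F, and let m, n ∈ ℤ with a = m·1_F and b = n·1_F. Then in the ℒ-module A_{a,b} one has L_{i,j}·v_{−m,n−1} = 0 for all i,j ∈ ℤ; consequently the one-dimensional subspace F·v_{−m,n−1} is a nonzero proper ℒ-submodule of A_{a,b}, so A_{a,b} is not irreducible. -/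
/-- Let `F` be a field of characteristic zero, `L` the Block type Lie
algebra over `F`, and `a = m·1_F`, `b = n·1_F` with `m n : ℤ`.  Then in the `L`-module
`A_{a,b}` one has `L_{i,j} · v_{−m,n−1} = 0` for all `i j : ℤ`; consequently the
one-dimensional subspace `F·v_{−m,n−1}` is a nonzero proper `L`-submodule of `A_{a,b}`,
so `A_{a,b}` is not irreducible. -/
theorem block_module_Aab_reducible_of_int
    (F : Type*) [Field F] [CharZero F]
    (L : Type*) [LieRing L] [LieAlgebra F L]
    (E : Module.Basis (ℤ × ℤ) F L)
    (hE : ∀ i j k l : ℤ, ⁅E (i, j), E (k, l)⁆ =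
      (((j : F) + 1) * (k : F) - ((l : F) + 1) * (i : F)) • E (i + k, j + l))
    (V : Type*) [AddCommGroup V] [Module F V] [LieRingModule L V] [LieModule F L V]
    (v : Module.Basis (ℤ × ℤ) F V) (a b : F) (m n : ℤ)
    (hv : ∀ i j k l : ℤ, ⁅E (i, j), v (k, l)⁆ =
      (((j : F) + 1) * (a + (k : F)) + (b - 1 - (l : F)) * (i : F)) • v (i + k, j + l))
    (ha : a = (m : F)) (hb : b = (n : F)) :
    (∀ i j : ℤ, ⁅E (i, j), v (-m, n - 1)⁆ = 0) ∧
    (∃ N : LieSubmodule F L V,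
      N.toSubmodule = Submodule.span F {v (-m, n - 1)} ∧ N ≠ ⊥ ∧ N ≠ ⊤) ∧
    ¬ (∀ N : LieSubmodule F L V, N = ⊥ ∨ N = ⊤) := by
  have hbasis : ∀ i j : ℤ, ⁅E (i, j), v (-m, n - 1)⁆ = 0 := by
    intro i j
    rw [hv i j (-m) (n - 1)]
    have : ((j : F) + 1) * (a + ((-m : ℤ) : F)) + (b - 1 - ((n - 1 : ℤ) : F)) * (i : F) = 0 := by
      subst ha hb; push_cast; ring
    rw [this, zero_smul]
  -- bracket with the distinguished vector vanishes for every element of L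
  have hall : ∀ x : L, ⁅x, v (-m, n - 1)⁆ = 0 := by
    letI : LieRing (Module.End F V) := LieRing.ofAssociativeRing
    letI : LieAlgebra F (Module.End F V) := LieAlgebra.ofAssociativeAlgebra
    have hf : ∀ x : L, ((LieModule.toEnd F L V).toLinearMap.flip
        (v (-m, n - 1))) x = ⁅x, v (-m, n - 1)⁆ := fun x => rfl
    intro x
    rw [← hf]
    have : (LieModule.toEnd F L V).toLinearMap.flip (v (-m, n - 1)) = 0 := by
      apply E.ext
      intro ⟨i, j⟩
      simp only [LinearMap.flip_apply, LinearMap.zero_apply]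
      exact (hf (E (i, j))).trans (hbasis i j)
    rw [this]; rfl
  have hne : v (-m, n - 1) ≠ 0 := v.ne_zero _
  -- the Lie submodule
  let N : LieSubmodule F L V :=
    { Submodule.span F {v (-m, n - 1)} with
      lie_mem := by
        intro x w hw
        have hw' : w ∈ Submodule.span F {v (-m, n - 1)} := hw
        rcases Submodule.mem_span_singleton.mp hw' with ⟨c, rfl⟩
        show ⁅x, c • v (-m, n - 1)⁆ ∈ Submodule.span F {v (-m, n - 1)}
        rw [lie_smul, hall x, smul_zero]
        exact Submodule.zero_mem _ }
  have hNtop : N.toSubmodule = Submodule.span F {v (-m, n - 1)} := rfl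
  have hNbot : N ≠ ⊥ := by
    intro h
    have : v (-m, n - 1) ∈ N := Submodule.mem_span_singleton_self _
    rw [h] at this
    exact hne (LieSubmodule.mem_bot (R := F) (L := L) (M := V) _ |>.mp this)
  have hNtop' : N ≠ ⊤ := by
    intro h
    have hmem : v (-m + 1, n - 1) ∈ N := h ▸ LieSubmodule.mem_top _
    have hmem' : v (-m + 1, n - 1) ∈ Submodule.span F {v (-m, n - 1)} := hmem
    rcases Submodule.mem_span_singleton.mp hmem' with ⟨c, hc⟩
    have hne2 : ((-m, n - 1) : ℤ × ℤ) ≠ (-m + 1, n - 1) := by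
      intro h; exact absurd (congrArg Prod.fst h) (by simp)
    have := congrArg (fun w => v.repr w (-m + 1, n - 1)) hc
    simp [Module.Basis.repr_self, Finsupp.single_apply, hne2] at this
  refine ⟨hbasis, ⟨N, hNtop, hNbot, hNtop'⟩, ?_⟩
  intro h
  rcases h N with h | h
  · exact hNbot h
  · exact hNtop' h
end

section
/- Let F be a field of characteristic zero, let ℒ be the Lie algebra of Block type over F, and let m, n ∈ ℤ with a = m·1_F and b = n·1_F. Then in the ℒ-module A_{a,b}: (1) the subspace W₃ spanned by {v_{k,l} | (k,l) ≠ (−m, n−2)} is an ℒ-submodule, and it contains the one-dimensional submodule W₁ = F·v_{−m,n−1}; (2) the ℒ-submodule generated by the single vector v_{−m,n−2} is the whole module A_{a,b}. -/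
/-- Let `F` be a field of characteristic zero, `L` the Block type Lie
algebra over `F`, and `a = m·1_F`, `b = n·1_F` with `m n : ℤ`.  Then in the `L`-module
`A_{a,b}`:
(1) the subspace `W₃` spanned by `{v_{k,l} | (k,l) ≠ (−m,n−2)}` is an `L`-submodule and it
contains the one-dimensional submodule `W₁ = F·v_{−m,n−1}`;
(2) the `L`-submodule generated by `v_{−m,n−2}` is the whole module. -/
theorem block_module_Aab_structure_of_int
    (F : Type*) [Field F] [CharZero F]
    (L : Type*) [LieRing L] [LieAlgebra F L]
    (E : Module.Basis (ℤ × ℤ) F L)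
    (hE : ∀ i j k l : ℤ, ⁅E (i, j), E (k, l)⁆ =
      (((j : F) + 1) * (k : F) - ((l : F) + 1) * (i : F)) • E (i + k, j + l))
    (V : Type*) [AddCommGroup V] [Module F V] [LieRingModule L V] [LieModule F L V]
    (v : Module.Basis (ℤ × ℤ) F V) (a b : F) (m n : ℤ)
    (hv : ∀ i j k l : ℤ, ⁅E (i, j), v (k, l)⁆ =
      (((j : F) + 1) * (a + (k : F)) + (b - 1 - (l : F)) * (i : F)) • v (i + k, j + l))
    (ha : a = (m : F)) (hb : b = (n : F)) :
    (∃ N₃ : LieSubmodule F L V,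
      N₃.toSubmodule =
        Submodule.span F {x | ∃ k l : ℤ, (k, l) ≠ (-m, n - 2) ∧ x = v (k, l)} ∧
      Submodule.span F {v (-m, n - 1)} ≤ N₃.toSubmodule) ∧
    LieSubmodule.lieSpan F L {v (-m, n - 2)} = ⊤ := by
  subst ha hb
  set S : Set V := {x | ∃ k l : ℤ, (k, l) ≠ (-m, n - 2) ∧ x = v (k, l)} with hSdef
  -- key computation for part (1)
  have basic : ∀ (i j k l : ℤ), (k, l) ≠ (-m, n - 2) →
      ⁅E (i, j), v (k, l)⁆ ∈ Submodule.span F S := by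
    intro i j k l hkl
    rw [hv]
    by_cases h : (i + k, j + l) = (-m, n - 2)
    · obtain ⟨h1, h2⟩ := Prod.ext_iff.mp h
      have hk : k = -m - i := by omega
      have hl : l = n - 2 - j := by omega
      subst hk hl
      have hz : ((j : F) + 1) * ((m : F) + ((-m - i : ℤ) : F)) +
          ((n : F) - 1 - ((n - 2 - j : ℤ) : F)) * (i : F) = 0 := by
        push_cast; ring
      rw [hz, zero_smul]
      exact Submodule.zero_mem _
    · exact Submodule.smul_mem _ _ (Submodule.subset_span ⟨i + k, j + l, h, rfl⟩)
  have closed_basis : ∀ (p : ℤ × ℤ) (x : V), x ∈ Submodule.span F S →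
      ⁅E p, x⁆ ∈ Submodule.span F S := by
    intro p x hx
    induction hx using Submodule.span_induction with
    | mem z hz =>
        obtain ⟨k, l, hkl, rfl⟩ := hz
        obtain ⟨i, j⟩ := p
        exact basic i j k l hkl
    | zero => simp
    | add y z _ _ h1 h2 => rw [lie_add]; exact Submodule.add_mem _ h1 h2
    | smul c y _ h => rw [lie_smul]; exact Submodule.smul_mem _ _ h
  have closed : ∀ (y : L) (x : V), x ∈ Submodule.span F S →
      ⁅y, x⁆ ∈ Submodule.span F S := by
    intro y x hx
    have hy : y ∈ Submodule.span F (Set.range E) := by rw [E.span_eq]; trivial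
    induction hy using Submodule.span_induction with
    | mem z hz => obtain ⟨p, rfl⟩ := hz; exact closed_basis p x hx
    | zero => simp
    | add y z _ _ h1 h2 => rw [add_lie]; exact Submodule.add_mem _ h1 h2
    | smul c y _ h => rw [smul_lie]; exact Submodule.smul_mem _ _ h
  set N := LieSubmodule.lieSpan F L {v (-m, n - 2)} with hN
  have hw : v (-m, n - 2) ∈ N := LieSubmodule.subset_lieSpan rfl
  have stepB : ∀ k l : ℤ, k ≠ -m → v (k, l) ∈ N := by
    intro k l hk
    have hbr : ⁅E (k + m, l - (n - 2)), v (-m, n - 2)⁆ = ((k : F) + m) • v (k, l) := by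
      rw [hv]
      have h1 : (k + m + -m, l - (n - 2) + (n - 2)) = (k, l) := by
        rw [Prod.mk.injEq]; omega
      rw [h1]
      congr 1
      push_cast
      ring
    have hmem : ((k : F) + m) • v (k, l) ∈ N := hbr ▸ N.lie_mem hw
    have hne : ((k : F) + (m : F)) ≠ 0 := by
      have : ((k + m : ℤ) : F) ≠ 0 := Int.cast_ne_zero.mpr (by omega)
      push_cast at this; exact this
    have h2 : ((k : F) + m)⁻¹ • (((k : F) + m) • v (k, l)) ∈ N :=
      SMulMemClass.smul_mem _ hmem
    rwa [smul_smul, inv_mul_cancel₀ hne, one_smul] at h2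
  have stepC : ∀ l : ℤ, l ≠ n - 2 → v (-m, l) ∈ N := by
    intro l hl
    have hprev : v (-m - 1, l) ∈ N := stepB _ _ (by omega)
    have hbr : ⁅E (1, 0), v (-m - 1, l)⁆ = ((n : F) - 2 - l) • v (-m, l) := by
      rw [hv]
      have h1 : ((1 : ℤ) + (-m - 1), (0 : ℤ) + l) = (-m, l) := by
        rw [Prod.mk.injEq]; omega
      rw [h1]
      congr 1
      push_cast
      ring
    have hmem : ((n : F) - 2 - l) • v (-m, l) ∈ N := hbr ▸ N.lie_mem hprev
    have hne : ((n : F) - 2 - (l : F)) ≠ 0 := by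
      have : ((n - 2 - l : ℤ) : F) ≠ 0 := Int.cast_ne_zero.mpr (by omega)
      push_cast at this; exact this
    have h2 : ((n : F) - 2 - l)⁻¹ • (((n : F) - 2 - l) • v (-m, l)) ∈ N :=
      SMulMemClass.smul_mem _ hmem
    rwa [smul_smul, inv_mul_cancel₀ hne, one_smul] at h2
  have all : ∀ k l : ℤ, v (k, l) ∈ N := by
    intro k l
    by_cases hk : k = -m
    · subst hk
      by_cases hl : l = n - 2
      · subst hl; exact hw
      · exact stepC l hl
    · exact stepB k l hk
  constructor
  · refine ⟨{ Submodule.span F S with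
        lie_mem := fun {y x} hx => closed y x hx }, rfl, ?_⟩
    rw [Submodule.span_le, Set.singleton_subset_iff]
    exact Submodule.subset_span ⟨-m, n - 1, by simp, rfl⟩
  · rw [eq_top_iff]
    intro x htop
    clear htop
    have hx : x ∈ Submodule.span F (Set.range v) := by rw [v.span_eq]; trivial
    induction hx using Submodule.span_induction with
    | mem z hz => obtain ⟨⟨k, l⟩, rfl⟩ := hz; exact all k l
    | zero => exact N.zero_mem
    | add y z _ _ h1 h2 => exact N.add_mem h1 h2
    | smul c y _ h => exact SMulMemClass.smul_mem _ h
end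

section
/- Let F be a field of characteristic zero, let ℒ be the Lie algebra of Block type over F, and let V be an ℒ-module with basis {v_{k,l} | k,l ∈ ℤ} and scalars a^{i,j}_{k,l} ∈ F such that L_{i,j}·v_{k,l} = a^{i,j}_{k,l} v_{i+k,j+l} for all i,j,k,l ∈ ℤ. Assume there exist a, b₀, c ∈ F with a^{i,0}_{k,l} = a + k + (b₀ − l)·i for all i,k,l ∈ ℤ and a^{i,i}_{j,j} = a + j + c·i for all i,j ∈ ℤ. Then c = a + b₀, or (a + b₀ = 0 and c = 1), or (a + b₀ = 1 and c = 0). -/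
theorem chainB_aux {F : Type*} [Field F] [CharZero F] (c : ℤ → ℤ → ℤ → ℤ → F) (a b₀ cc : F)
    (hM : ∀ i j k l p q : ℤ, (((j : F) + 1) * (k : F) - ((l : F) + 1) * (i : F)) * c (i+k) (j+l) p q
      = c k l p q * c i j (k+p) (l+q) - c i j p q * c k l (i+p) (j+q))
    (hc0 : ∀ i k l : ℤ, c i 0 k l = a + (k : F) + (b₀ - (l : F)) * (i : F))
    (hcc : ∀ i j : ℤ, c i i j j = a + (j : F) + cc * (i : F))
    (hs1 : a + b₀ - 1 ≠ 0) (hs2 : a + b₀ - 2 ≠ 0)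
    (m j : ℤ) (hm : (m : F) ≠ 0) :
    ∃ K : F, ((m : F) + 1) * (a + (j : F) + cc * (m : F)) = K * (a + (j : F) + (m : F) * (a + b₀))
      ∧ c (m+1) m (j-2) j = (a + b₀ - 2) * K
      ∧ c m m (j-1) j = a + (j : F) + cc * (m : F) - K
      ∧ c m m (j-2) j = a + (j : F) + cc * (m : F) - 2 * K := by
  have mb1 := hM 1 0 m m (j-1) j
  rw [show (1:ℤ)+m = m+1 by ring, show (0:ℤ)+m = m by ring, show (1:ℤ)+(j-1) = j by ring,
    show (0:ℤ)+j = j by ring, hc0, hc0, hcc] at mb1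
  have mb2 := hM 1 0 m m (j-2) j
  rw [show (1:ℤ)+m = m+1 by ring, show (0:ℤ)+m = m by ring, show (1:ℤ)+(j-2) = j-1 by ring,
    show (0:ℤ)+j = j by ring, hc0, hc0] at mb2
  have mb3 := hM 1 0 (m+1) m (j-1) j
  rw [show (1:ℤ)+(m+1) = m+2 by ring, show (0:ℤ)+m = m by ring, show (1:ℤ)+(j-1) = j by ring,
    show (0:ℤ)+j = j by ring, hc0, hc0] at mb3
  have mb4 := hM 1 0 (m+1) m (j-2) j
  rw [show (1:ℤ)+(m+1) = m+2 by ring, show (0:ℤ)+m = m by ring, show (1:ℤ)+(j-2) = j-1 by ring,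
    show (0:ℤ)+j = j by ring, hc0, hc0] at mb4
  have mb5 := hM (-1) 0 m m j j
  rw [show (-1:ℤ)+m = m-1 by ring, show (0:ℤ)+m = m by ring, show (-1:ℤ)+j = j-1 by ring,
    show (0:ℤ)+j = j by ring, hc0, hc0, hcc] at mb5
  have mb6 := hM (-2) 0 (m+1) m j j
  rw [show (-2:ℤ)+(m+1) = m-1 by ring, show (0:ℤ)+m = m by ring, show (-2:ℤ)+j = j-2 by ring,
    show (0:ℤ)+j = j by ring, hc0, hc0] at mb6
  push_cast at mb1 mb2 mb3 mb4 mb5 mb6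
  set K : F := c (m+1) m (j-1) j / (a + b₀ - 1) with hKdef
  have hK : c (m+1) m (j-1) j = (a + b₀ - 1) * K := by
    rw [hKdef]; field_simp
  have hgj : c (m+1) m j j = (a + b₀) * K := by
    apply mul_left_cancel₀ hs1
    linear_combination mb3 + (a + b₀) * hK
  have hg2 : c (m+1) m (j-2) j = (a + b₀ - 2) * K := by
    apply mul_left_cancel₀ hs1
    linear_combination (-1 : F) * mb4 + (a + b₀ - 2) * hK
  have hf1 : c m m (j-1) j = a + (j : F) + cc * (m : F) - K := by
    apply mul_left_cancel₀ hs1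
    linear_combination (-1 : F) * mb1 - hK
  have hf2 : c m m (j-2) j = a + (j : F) + cc * (m : F) - 2 * K := by
    apply mul_left_cancel₀ hs2
    linear_combination (-1 : F) * mb2 - hg2 + (a + b₀ - 2) * hf1
  have h6 : (6 : F) * (m : F) ≠ 0 := mul_ne_zero (by norm_num) hm
  refine ⟨K, ?_, hg2, hf1, hf2⟩
  apply mul_left_cancel₀ h6
  linear_combination (-3 : F) * ((m:F)+1) * mb5 + (2*(m:F)+1) * mb6
    + 3*((m:F)+1)*(a + (j:F) - (b₀ - (j:F))) * hf1
    + (2*(m:F)+1)*(a + (m:F) + 1 + (j:F) - 2*(b₀ - (m:F) - (j:F))) * hgj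
    - (2*(m:F)+1)*(a + (j:F) - 2*(b₀ - (j:F))) * hg2

theorem chainA_aux {F : Type*} [Field F] [CharZero F] (c : ℤ → ℤ → ℤ → ℤ → F) (a b₀ cc : F)
    (hM : ∀ i j k l p q : ℤ, (((j : F) + 1) * (k : F) - ((l : F) + 1) * (i : F)) * c (i+k) (j+l) p q
      = c k l p q * c i j (k+p) (l+q) - c i j p q * c k l (i+p) (j+q))
    (hc0 : ∀ i k l : ℤ, c i 0 k l = a + (k : F) + (b₀ - (l : F)) * (i : F))
    (hcc : ∀ i j : ℤ, c i i j j = a + (j : F) + cc * (i : F))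
    (hs0 : a + b₀ ≠ 0) (hsp1 : a + b₀ + 1 ≠ 0) (hsp2 : a + b₀ + 2 ≠ 0)
    (m j : ℤ) (hm : (m : F) ≠ 0) :
    ∃ K : F, ((m : F) + 1) * (a + (j : F) + cc * (m : F)) = K * (a + (j : F) + (m : F) * (a + b₀))
      ∧ c (m+1) m j j = (a + b₀) * K
      ∧ c m m (j+1) j = a + (j : F) + cc * (m : F) + K := by
  have ma1 := hM 1 0 m m j j
  rw [show (1:ℤ)+m = m+1 by ring, show (0:ℤ)+m = m by ring, show (1:ℤ)+j = j+1 by ring,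
    show (0:ℤ)+j = j by ring, hc0, hc0, hcc] at ma1
  have ma2 := hM 1 0 m m (j+1) j
  rw [show (1:ℤ)+m = m+1 by ring, show (0:ℤ)+m = m by ring, show (1:ℤ)+(j+1) = j+2 by ring,
    show (0:ℤ)+j = j by ring, hc0, hc0] at ma2
  have ma3 := hM 1 0 m m (j+2) j
  rw [show (1:ℤ)+m = m+1 by ring, show (0:ℤ)+m = m by ring, show (1:ℤ)+(j+2) = j+3 by ring,
    show (0:ℤ)+j = j by ring, hc0, hc0] at ma3
  have ma4 := hM 1 0 (m+1) m j j
  rw [show (1:ℤ)+(m+1) = m+2 by ring, show (0:ℤ)+m = m by ring, show (1:ℤ)+j = j+1 by ring,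
    show (0:ℤ)+j = j by ring, hc0, hc0] at ma4
  have ma5 := hM 1 0 (m+1) m (j+1) j
  rw [show (1:ℤ)+(m+1) = m+2 by ring, show (0:ℤ)+m = m by ring, show (1:ℤ)+(j+1) = j+2 by ring,
    show (0:ℤ)+j = j by ring, hc0, hc0] at ma5
  have ma6 := hM 3 0 m m j j
  rw [show (3:ℤ)+m = m+3 by ring, show (0:ℤ)+m = m by ring, show (3:ℤ)+j = j+3 by ring,
    show (0:ℤ)+j = j by ring, hc0, hc0, hcc] at ma6
  have ma7 := hM 2 0 (m+1) m j j
  rw [show (2:ℤ)+(m+1) = m+3 by ring, show (0:ℤ)+m = m by ring, show (2:ℤ)+j = j+2 by ring,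
    show (0:ℤ)+j = j by ring, hc0, hc0] at ma7
  push_cast at ma1 ma2 ma3 ma4 ma5 ma6 ma7
  set K : F := c (m+1) m (j+1) j / (a + b₀ + 1) with hKdef
  have hK : c (m+1) m (j+1) j = (a + b₀ + 1) * K := by
    rw [hKdef]; field_simp
  have hgj : c (m+1) m j j = (a + b₀) * K := by
    apply mul_left_cancel₀ hsp1
    linear_combination (-1 : F) * ma4 + (a + b₀) * hK
  have hg2 : c (m+1) m (j+2) j = (a + b₀ + 2) * K := by
    apply mul_left_cancel₀ hsp1
    linear_combination ma5 + (a + b₀ + 2) * hK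
  have hf1 : c m m (j+1) j = a + (j : F) + cc * (m : F) + K := by
    apply mul_left_cancel₀ hs0
    linear_combination ma1 + hgj
  have hf2 : c m m (j+2) j = a + (j : F) + cc * (m : F) + 2 * K := by
    apply mul_left_cancel₀ hsp1
    linear_combination ma2 + hK + (a + b₀ + 1) * hf1
  have hf3 : c m m (j+3) j = a + (j : F) + cc * (m : F) + 3 * K := by
    apply mul_left_cancel₀ hsp2
    linear_combination ma3 + hg2 + (a + b₀ + 2) * hf2
  have h2m : (2 : F) * (m : F) ≠ 0 := mul_ne_zero (by norm_num) hm
  refine ⟨K, ?_, hgj, hf1⟩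
  apply mul_left_cancel₀ h2m
  linear_combination ((m:F)+1) * ma6 - (2*(m:F)+3) * ma7
    - ((m:F)+1)*(a + (j:F) + 3*(b₀ - (j:F))) * hf3
    - (2*(m:F)+3)*(a + (m:F) + 1 + (j:F) + 2*(b₀ - (m:F) - (j:F))) * hgj
    + (2*(m:F)+3)*(a + (j:F) + 2*(b₀ - (j:F))) * hg2

theorem starB_aux {F : Type*} [Field F] [CharZero F] (c : ℤ → ℤ → ℤ → ℤ → F) (a b₀ cc : F)
    (hM : ∀ i j k l p q : ℤ, (((j : F) + 1) * (k : F) - ((l : F) + 1) * (i : F)) * c (i+k) (j+l) p q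
      = c k l p q * c i j (k+p) (l+q) - c i j p q * c k l (i+p) (j+q))
    (hc0 : ∀ i k l : ℤ, c i 0 k l = a + (k : F) + (b₀ - (l : F)) * (i : F))
    (hcc : ∀ i j : ℤ, c i i j j = a + (j : F) + cc * (i : F))
    (hs1 : a + b₀ - 1 ≠ 0) (hs2 : a + b₀ - 2 ≠ 0) :
    ∀ j : ℤ, (a + (j:F) + 2*cc) * (a + (j:F) + (a+b₀)) * (a + (j:F) + (a+b₀) + 1)
      = (a + (j:F) + cc) * (a + (j:F) + cc + 1) * (a + (j:F) + 2*(a+b₀)) := by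
  intro j
  obtain ⟨K₁, hd1, hg1, hf11, hf12⟩ :=
    chainB_aux c a b₀ cc hM hc0 hcc hs1 hs2 1 j (by norm_num)
  obtain ⟨K₁', hd1', hg1', hf11', -⟩ :=
    chainB_aux c a b₀ cc hM hc0 hcc hs1 hs2 1 (j+1) (by norm_num)
  obtain ⟨K₂, hd2, hg2', -, -⟩ :=
    chainB_aux c a b₀ cc hM hc0 hcc hs1 hs2 2 j (by norm_num)
  rw [show (1:ℤ)+1 = 2 by norm_num] at hg1
  rw [show (1:ℤ)+1 = 2 by norm_num, show j+1-2 = j-1 by ring] at hg1'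
  rw [show j+1-1 = j by ring] at hf11'
  rw [show (2:ℤ)+1 = 3 by norm_num] at hg2'
  have mc := hM 2 1 1 1 (j-2) j
  rw [show (2:ℤ)+1 = 3 by norm_num, show (1:ℤ)+1 = 2 by norm_num,
    show (1:ℤ)+(j-2) = j-1 by ring, show (1:ℤ)+j = j+1 by ring,
    show (2:ℤ)+(j-2) = j by ring] at mc
  rw [hf12, hg1', hg1, hf11', hg2'] at mc
  push_cast at mc hd1 hd1' hd2
  have hE4 : 2*K₂ = K₁*(a + (j:F) + 1 + cc) + K₁*K₁' - K₁'*(a + (j:F) + cc) := by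
    apply mul_left_cancel₀ hs2
    linear_combination (-1 : F) * mc
  linear_combination (1/6 : F) * (
      ((a+(j:F)+(a+b₀))*(a+(j:F)+(a+b₀)+1)*(a+(j:F)+2*(a+b₀))) * hE4
    + 2*(a+(j:F)+(a+b₀))*(a+(j:F)+(a+b₀)+1) * hd2
    + ((a+(j:F)+cc)*(a+(j:F)+(a+b₀))*(a+(j:F)+2*(a+b₀)) - 2*(a+(j:F)+cc)*(a+(j:F)+2*(a+b₀))) * hd1'
    + (-((a+(j:F)+1+cc)*(a+(j:F)+(a+b₀)+1)*(a+(j:F)+2*(a+b₀)) + 2*(a+(j:F)+1+cc)*(a+(j:F)+2*(a+b₀)))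
        + (a+(j:F)+2*(a+b₀))*(2*(a+(j:F)+1+cc) - K₁'*(a+(j:F)+1+(a+b₀)))) * hd1)

theorem starA_aux {F : Type*} [Field F] [CharZero F] (c : ℤ → ℤ → ℤ → ℤ → F) (a b₀ cc : F)
    (hM : ∀ i j k l p q : ℤ, (((j : F) + 1) * (k : F) - ((l : F) + 1) * (i : F)) * c (i+k) (j+l) p q
      = c k l p q * c i j (k+p) (l+q) - c i j p q * c k l (i+p) (j+q))
    (hc0 : ∀ i k l : ℤ, c i 0 k l = a + (k : F) + (b₀ - (l : F)) * (i : F))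
    (hcc : ∀ i j : ℤ, c i i j j = a + (j : F) + cc * (i : F))
    (hs0 : a + b₀ ≠ 0) (hsp1 : a + b₀ + 1 ≠ 0) (hsp2 : a + b₀ + 2 ≠ 0) :
    ∀ j : ℤ, (a + (j:F) + 2*cc) * (a + (j:F) + (a+b₀)) * (a + (j:F) + (a+b₀) + 1)
      = (a + (j:F) + cc) * (a + (j:F) + cc + 1) * (a + (j:F) + 2*(a+b₀)) := by
  intro j
  obtain ⟨K₁, hd1, hg1, -⟩ :=
    chainA_aux c a b₀ cc hM hc0 hcc hs0 hsp1 hsp2 1 j (by norm_num)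
  obtain ⟨K₁', hd1', hg1', hf1'⟩ :=
    chainA_aux c a b₀ cc hM hc0 hcc hs0 hsp1 hsp2 1 (j+1) (by norm_num)
  obtain ⟨K₂, hd2, hg2', -⟩ :=
    chainA_aux c a b₀ cc hM hc0 hcc hs0 hsp1 hsp2 2 j (by norm_num)
  rw [show (1:ℤ)+1 = 2 by norm_num] at hg1
  rw [show (1:ℤ)+1 = 2 by norm_num] at hg1'
  rw [show j+1+1 = j+2 by ring] at hf1'
  rw [show (2:ℤ)+1 = 3 by norm_num] at hg2'
  have mc := hM 2 1 1 1 j j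
  rw [show (2:ℤ)+1 = 3 by norm_num, show (1:ℤ)+1 = 2 by norm_num,
    show (1:ℤ)+j = j+1 by ring, show (2:ℤ)+j = j+2 by ring] at mc
  rw [hcc, hg1', hg1, hf1', hg2'] at mc
  push_cast at mc hd1 hd1' hd2
  have hE4 : 2*K₂ = K₁*(a + (j:F) + 1 + cc) + K₁*K₁' - K₁'*(a + (j:F) + cc) := by
    apply mul_left_cancel₀ hs0
    linear_combination (-1 : F) * mc
  linear_combination (1/6 : F) * (
      ((a+(j:F)+(a+b₀))*(a+(j:F)+(a+b₀)+1)*(a+(j:F)+2*(a+b₀))) * hE4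
    + 2*(a+(j:F)+(a+b₀))*(a+(j:F)+(a+b₀)+1) * hd2
    + ((a+(j:F)+cc)*(a+(j:F)+(a+b₀))*(a+(j:F)+2*(a+b₀)) - 2*(a+(j:F)+cc)*(a+(j:F)+2*(a+b₀))) * hd1'
    + (-((a+(j:F)+1+cc)*(a+(j:F)+(a+b₀)+1)*(a+(j:F)+2*(a+b₀)) + 2*(a+(j:F)+1+cc)*(a+(j:F)+2*(a+b₀)))
        + (a+(j:F)+2*(a+b₀))*(2*(a+(j:F)+1+cc) - K₁'*(a+(j:F)+1+(a+b₀)))) * hd1)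


/-- Lemma 2.3.  Let `F` be a field of characteristic zero, `L` the Block
type Lie algebra over `F`, and `V` an `L`-module with basis `{v_{k,l}}` and scalars
`c i j k l = a^{i,j}_{k,l}` such that `L_{i,j}·v_{k,l} = a^{i,j}_{k,l} v_{i+k,j+l}`.
Assume `a^{i,0}_{k,l} = a + k + (b₀ − l)·i` and `a^{i,i}_{j,j} = a + j + c·i`.  Then
`c = a + b₀`, or `a + b₀ = 0 ∧ c = 1`, or `a + b₀ = 1 ∧ c = 0`. -/
theorem block_module_lemma_c
    (F : Type*) [Field F] [CharZero F]
    (L : Type*) [LieRing L] [LieAlgebra F L]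
    (E : Module.Basis (ℤ × ℤ) F L)
    (hE : ∀ i j k l : ℤ, ⁅E (i, j), E (k, l)⁆ =
      (((j : F) + 1) * (k : F) - ((l : F) + 1) * (i : F)) • E (i + k, j + l))
    (V : Type*) [AddCommGroup V] [Module F V] [LieRingModule L V] [LieModule F L V]
    (v : Module.Basis (ℤ × ℤ) F V) (c : ℤ → ℤ → ℤ → ℤ → F)
    (hv : ∀ i j k l : ℤ, ⁅E (i, j), v (k, l)⁆ = c i j k l • v (i + k, j + l))
    (a b₀ cc : F)
    (hc0 : ∀ i k l : ℤ, c i 0 k l = a + (k : F) + (b₀ - (l : F)) * (i : F))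
    (hcc : ∀ i j : ℤ, c i i j j = a + (j : F) + cc * (i : F)) :
    cc = a + b₀ ∨ (a + b₀ = 0 ∧ cc = 1) ∨ (a + b₀ = 1 ∧ cc = 0) := by
  have hM : ∀ i j k l p q : ℤ, (((j : F) + 1) * (k : F) - ((l : F) + 1) * (i : F)) * c (i+k) (j+l) p q
      = c k l p q * c i j (k+p) (l+q) - c i j p q * c k l (i+p) (j+q) := by
    intro i j k l p q
    have hw : (⁅E (i,j), ⁅E (k,l), v (p,q)⁆⁆ : V)
        = ⁅⁅E (i,j), E (k,l)⁆, v (p,q)⁆ + ⁅E (k,l), ⁅E (i,j), v (p,q)⁆⁆ := leibniz_lie _ _ _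
    rw [hv k l p q, hv i j p q, hE i j k l] at hw
    rw [lie_smul, lie_smul, smul_lie] at hw
    rw [hv i j (k+p) (l+q), hv k l (i+p) (j+q), hv (i+k) (j+l) p q] at hw
    rw [smul_smul, smul_smul, smul_smul,
      show i+(k+p) = i+k+p by ring, show j+(l+q) = j+l+q by ring,
      show k+(i+p) = i+k+p by ring, show l+(j+q) = j+l+q by ring] at hw
    have h2 := congrArg (fun z => v.repr z (i+k+p, j+l+q)) hw
    simp only [map_add, map_smul, Module.Basis.repr_self, Finsupp.smul_apply, Finsupp.add_apply,
      Finsupp.single_eq_same, smul_eq_mul, mul_one] at h2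
    linear_combination (-1 : F) * h2
  have hstar : ∀ j : ℤ, (a + (j:F) + 2*cc) * (a + (j:F) + (a+b₀)) * (a + (j:F) + (a+b₀) + 1)
      = (a + (j:F) + cc) * (a + (j:F) + cc + 1) * (a + (j:F) + 2*(a+b₀)) := by
    by_cases h1 : a + b₀ = 1
    · exact starA_aux c a b₀ cc hM hc0 hcc (by rw [h1]; norm_num) (by rw [h1]; norm_num)
        (by rw [h1]; norm_num)
    · by_cases h2 : a + b₀ = 2
      · exact starA_aux c a b₀ cc hM hc0 hcc (by rw [h2]; norm_num) (by rw [h2]; norm_num)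
          (by rw [h2]; norm_num)
      · exact starB_aux c a b₀ cc hM hc0 hcc (sub_ne_zero.mpr h1) (sub_ne_zero.mpr h2)
  have h0 := hstar 0
  have h1 := hstar 1
  push_cast at h0 h1
  have hP : (a + b₀ - cc) * ((a + b₀) + cc - 1) = 0 := by linear_combination h1 - h0
  have hQ : (a + b₀ - cc) * ((a + b₀) * cc) = 0 := by
    linear_combination ((1+a)/2) * h0 - (a/2) * h1
  by_cases hcs : cc = a + b₀
  · exact Or.inl hcs
  · have hne : a + b₀ - cc ≠ 0 := fun h => hcs (by linear_combination -h)
    have h1' : (a + b₀) + cc - 1 = 0 := (mul_eq_zero.mp hP).resolve_left hne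
    have h2' : (a + b₀) * cc = 0 := (mul_eq_zero.mp hQ).resolve_left hne
    rcases mul_eq_zero.mp h2' with h | h
    · exact Or.inr (Or.inl ⟨h, by linear_combination h1' - h⟩)
    · exact Or.inr (Or.inr ⟨by linear_combination h1' - h, h⟩)
end

section
/- Let F be a field of characteristic zero, let ℒ be the Lie algebra of Block type over F, and let V be an ℒ-module together with a family of vectors v_{k,l} ∈ V (k,l ∈ ℤ) such that v_{0,−2} = 0, the set {v_{k,l} | (k,l) ≠ (0,−2)} is a basis of V, and there are scalars c_{i,j} ∈ F with: L_{i,j}·v_{k,l} = ((j+1)k − (l+1)i) v_{i+k,j+l} whenever (k,l) ≠ (0,−1) and (i+k,j+l) ≠ (0,−1); L_{i,j}·v_{0,−1} = 0 for all (i,j) ≠ (0,0); and L_{i,j}·v_{−i,−j−1} = c_{i,j} v_{0,−1} for all i,j ∈ ℤ. Then c_{i,j} = i·c_{1,0} for all i,j ∈ ℤ. -/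
/-- Case 1 of the deformation analysis.  Let `F` be a field of
characteristic zero, `L` the Block type Lie algebra over `F`, and `V` an `L`-module with a
family of vectors `v_{k,l}` such that `v_{0,−2} = 0`, the family
`{v_{k,l} | (k,l) ≠ (0,−2)}` is a basis of `V`, and with scalars `c_{i,j}` such that:
`L_{i,j}·v_{k,l} = ((j+1)k − (l+1)i) v_{i+k,j+l}` whenever `(k,l) ≠ (0,−1)` and
`(i+k,j+l) ≠ (0,−1)`; `L_{i,j}·v_{0,−1} = 0` for `(i,j) ≠ (0,0)`; and
`L_{i,j}·v_{−i,−j−1} = c_{i,j} v_{0,−1}`.  Then `c_{i,j} = i·c_{1,0}` for all `i j`. -/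
theorem block_module_deformation_case1
    (F : Type*) [Field F] [CharZero F]
    (L : Type*) [LieRing L] [LieAlgebra F L]
    (E : Module.Basis (ℤ × ℤ) F L)
    (hE : ∀ i j k l : ℤ, ⁅E (i, j), E (k, l)⁆ =
      (((j : F) + 1) * (k : F) - ((l : F) + 1) * (i : F)) • E (i + k, j + l))
    (V : Type*) [AddCommGroup V] [Module F V] [LieRingModule L V] [LieModule F L V]
    (v : ℤ × ℤ → V)
    (hv02 : v ((0 : ℤ), (-2 : ℤ)) = 0)
    (bV : Module.Basis {p : ℤ × ℤ // p ≠ ((0 : ℤ), (-2 : ℤ))} F V)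
    (hbV : ∀ p : {p : ℤ × ℤ // p ≠ ((0 : ℤ), (-2 : ℤ))}, bV p = v p.1)
    (c : ℤ → ℤ → F)
    (hgen : ∀ i j k l : ℤ, (k, l) ≠ ((0 : ℤ), (-1 : ℤ)) →
        (i + k, j + l) ≠ ((0 : ℤ), (-1 : ℤ)) →
      ⁅E (i, j), v (k, l)⁆ =
        (((j : F) + 1) * (k : F) - ((l : F) + 1) * (i : F)) • v (i + k, j + l))
    (h01 : ∀ i j : ℤ, (i, j) ≠ ((0 : ℤ), (0 : ℤ)) → ⁅E (i, j), v ((0 : ℤ), (-1 : ℤ))⁆ = 0)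
    (hc : ∀ i j : ℤ, ⁅E (i, j), v (-i, -j - 1)⁆ = c i j • v ((0 : ℤ), (-1 : ℤ))) :
    ∀ i j : ℤ, c i j = (i : F) * c 1 0 := by
  have hw : v ((0:ℤ),(-1:ℤ)) ≠ 0 := by
    have h := hbV ⟨((0:ℤ),(-1:ℤ)), by simp⟩
    rw [← h]
    exact bV.ne_zero _
  have hcancel : ∀ a b : F, a • v ((0:ℤ),(-1:ℤ)) = b • v ((0:ℤ),(-1:ℤ)) → a = b := by
    intro a b hab
    have h0 : (a - b) • v ((0:ℤ),(-1:ℤ)) = 0 := by rw [sub_smul, hab, sub_self]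
    rcases smul_eq_zero.mp h0 with h | h
    · exact sub_eq_zero.mp h
    · exact absurd h hw
  have key : ∀ a b k l : ℤ, (a, b) ≠ ((0:ℤ),(0:ℤ)) → (k, l) ≠ ((0:ℤ),(0:ℤ)) →
      (a + k, b + l) ≠ ((0:ℤ),(0:ℤ)) →
      (((b:F)+1)*(k:F) - ((l:F)+1)*(a:F)) * c (a+k) (b+l)
        = (((b:F)+(l:F))*(k:F) - ((l:F)+1)*((a:F)+(k:F))) * c a b
          + (((b:F)+1)*((a:F)+(k:F)) - ((b:F)+(l:F))*(a:F)) * c k l := by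
    intro a b k l h1 h2 h3
    have h1' : ¬(a = 0 ∧ b = 0) := by simpa [Prod.ext_iff] using h1
    have h2' : ¬(k = 0 ∧ l = 0) := by simpa [Prod.ext_iff] using h2
    have h3' : ¬(a + k = 0 ∧ b + l = 0) := by simpa [Prod.ext_iff] using h3
    have ne1 : (-(a+k), -(b+l)-1) ≠ ((0:ℤ),(-1:ℤ)) := by
      simp only [ne_eq, Prod.mk.injEq, not_and]; omega
    have neA : (k + -(a+k), l + (-(b+l)-1)) ≠ ((0:ℤ),(-1:ℤ)) := by
      simp only [ne_eq, Prod.mk.injEq, not_and]; omega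
    have neB : (a + -(a+k), b + (-(b+l)-1)) ≠ ((0:ℤ),(-1:ℤ)) := by
      simp only [ne_eq, Prod.mk.injEq, not_and]; omega
    have hA := hgen k l (-(a+k)) (-(b+l)-1) ne1 neA
    have hB := hgen a b (-(a+k)) (-(b+l)-1) ne1 neB
    have eA : ((k + -(a+k) : ℤ), (l + (-(b+l)-1) : ℤ)) = ((-a : ℤ), (-b-1 : ℤ)) := by
      simp only [Prod.mk.injEq]; omega
    have eB : ((a + -(a+k) : ℤ), (b + (-(b+l)-1) : ℤ)) = ((-k : ℤ), (-l-1 : ℤ)) := by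
      simp only [Prod.mk.injEq]; omega
    rw [eA] at hA
    rw [eB] at hB
    have hJ := lie_lie (E (a,b)) (E (k,l)) (v (-(a+k), -(b+l)-1))
    rw [hE a b k l, smul_lie, hc (a+k) (b+l), hA, hB, lie_smul, lie_smul, hc a b, hc k l,
      smul_smul, smul_smul, smul_smul, ← sub_smul] at hJ
    have heq := hcancel _ _ hJ
    push_cast at heq ⊢
    linear_combination heq
  -- c 0 0 = 0
  have hc00 : c 0 0 = 0 := by
    have hc0 : ⁅E ((0:ℤ),(0:ℤ)), v ((0:ℤ),(-1:ℤ))⁆ = c 0 0 • v ((0:ℤ),(-1:ℤ)) := by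
      have h := hc 0 0
      norm_num at h
      exact h
    have hJ := lie_lie (E ((1:ℤ),(0:ℤ))) (E ((-1:ℤ),(0:ℤ))) (v ((0:ℤ),(-1:ℤ)))
    rw [hE 1 0 (-1) 0, smul_lie, h01 1 0 (by decide), h01 (-1) 0 (by decide), lie_zero,
      lie_zero, show ((1:ℤ) + -1, (0:ℤ) + 0) = ((0:ℤ),(0:ℤ)) from by norm_num, hc0,
      smul_smul] at hJ
    rw [sub_zero] at hJ
    rcases smul_eq_zero.mp hJ with h | h
    · push_cast at h
      linear_combination (-1/2 : F)*h
    · exact absurd h hw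
  -- j-independence
  have hstep : ∀ a b : ℤ, a ≠ 0 → c a (b+1) = c a b := by
    intro a b ha
    have hk := key a b 0 1 (by simp only [ne_eq, Prod.mk.injEq, not_and]; omega)
      (by decide) (by simp only [ne_eq, Prod.mk.injEq, not_and]; omega)
    rw [show a + 0 = a from by ring] at hk
    have ha' : (a:F) ≠ 0 := Int.cast_ne_zero.mpr ha
    have h4 : ((-2:F) * a) * (c a (b+1) - c a b) = 0 := by
      push_cast at hk; linear_combination hk
    rcases mul_eq_zero.mp h4 with h | h
    · exact absurd h (by simp [ha'])
    · exact sub_eq_zero.mp h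
  have hj : ∀ a : ℤ, a ≠ 0 → ∀ b : ℤ, c a b = c a 0 := by
    intro a ha b
    induction b using Int.induction_on with
    | zero => rfl
    | succ n ih => rw [hstep a n ha, ih]
    | pred n ih =>
      have h := hstep a (-(n:ℤ)-1) ha
      rw [show (-(n:ℤ)-1)+1 = -(n:ℤ) from by ring] at h
      rw [← h, ih]
  -- values on the j = 0 line
  have h2v : c 2 0 = 2 * c 1 0 := by
    have hk := key 1 1 1 (-1) (by decide) (by decide) (by decide)
    have h1m := hj 1 (by norm_num) (-1)
    norm_num at hk
    linear_combination hk/2 + 2*h1m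
  have hm1 : c (-1) 0 = -c 1 0 := by
    have hk := key 2 0 (-1) 0 (by decide) (by decide) (by decide)
    norm_num at hk
    linear_combination h2v - hk
  have hm2 : c (-2) 0 = -2 * c 1 0 := by
    have hk := key (-1) 1 (-1) (-1) (by decide) (by decide) (by decide)
    have hjm := hj (-1) (by norm_num) (-1)
    norm_num at hk
    linear_combination hk/2 + 2*hjm + 2*hm1
  have hpos2 : ∀ n : ℕ, c ((n:ℤ)+2) 0 = ((n:F)+2) * c 1 0 := by
    intro n
    induction n with
    | zero => simpa using h2v
    | succ n ih =>
      have hk := key 1 0 ((n:ℤ)+2) 0 (by decide)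
        (by simp only [ne_eq, Prod.mk.injEq, not_and]; omega)
        (by simp only [ne_eq, Prod.mk.injEq, not_and]; omega)
      rw [show (1:ℤ)+((n:ℤ)+2) = (n:ℤ)+3 from by ring,
        show (0:ℤ)+(0:ℤ) = (0:ℤ) from by ring] at hk
      push_cast at hk
      have hne : ((n:F)+1) ≠ 0 := Nat.cast_add_one_ne_zero n
      have h4 : ((n:F)+1) * (c ((n:ℤ)+3) 0 - ((n:F)+3) * c 1 0) = 0 := by
        linear_combination hk + ((n:F)+3)*ih
      push_cast
      rw [show ((n:ℤ)+1)+2 = (n:ℤ)+3 from by ring]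
      rcases mul_eq_zero.mp h4 with h | h
      · exact absurd h hne
      · have := sub_eq_zero.mp h
        linear_combination this
  have hneg2 : ∀ n : ℕ, c (-(n:ℤ)-2) 0 = (-(n:F)-2) * c 1 0 := by
    intro n
    induction n with
    | zero => norm_num; linear_combination hm2
    | succ n ih =>
      have hk := key (-1) 0 (-(n:ℤ)-2) 0 (by decide)
        (by simp only [ne_eq, Prod.mk.injEq, not_and]; omega)
        (by simp only [ne_eq, Prod.mk.injEq, not_and]; omega)
      rw [show (-1:ℤ)+(-(n:ℤ)-2) = -(n:ℤ)-3 from by ring,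
        show (0:ℤ)+(0:ℤ) = (0:ℤ) from by ring] at hk
      push_cast at hk
      have hne : ((n:F)+1) ≠ 0 := Nat.cast_add_one_ne_zero n
      have h4 : ((n:F)+1) * (c (-(n:ℤ)-3) 0 - (-(n:F)-3) * c 1 0) = 0 := by
        linear_combination (-1:F)*hk + ((n:F)+3)*ih - ((n:F)+3)*hm1
      push_cast
      rw [show -((n:ℤ)+1)-2 = -(n:ℤ)-3 from by ring]
      rcases mul_eq_zero.mp h4 with h | h
      · exact absurd h hne
      · have := sub_eq_zero.mp h
        linear_combination this
  have hall : ∀ a : ℤ, c a 0 = (a:F) * c 1 0 := by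
    intro a
    obtain ⟨n, rfl | rfl⟩ := Int.eq_nat_or_neg a
    · rcases n with _ | _ | n
      · simpa using hc00
      · norm_num
      · have := hpos2 n
        push_cast at this ⊢
        rw [show ((n:ℤ)+1+1) = (n:ℤ)+2 from by ring]
        linear_combination this
    · rcases n with _ | _ | n
      · simpa using hc00
      · norm_num
        linear_combination hm1
      · have := hneg2 n
        push_cast at this ⊢
        rw [show -((n:ℤ)+1+1) = -(n:ℤ)-2 from by ring]
        linear_combination this
  have h0line : ∀ b : ℤ, c 0 b = 0 := by
    intro b
    by_cases hb0 : b = 0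
    · subst hb0; exact hc00
    by_cases hb2 : b = -2
    · subst hb2
      have hk := key 1 0 0 (-2) (by decide) (by decide) (by decide)
      have hjj := hj 1 (by norm_num) (-2)
      norm_num at hk
      linear_combination (hjj - hk)/3
    · have hk := key 1 b (-1) 0 (by simp only [ne_eq, Prod.mk.injEq, not_and]; omega) (by decide)
        (by simp only [ne_eq, Prod.mk.injEq, not_and]; omega)
      have hjb := hj 1 (by norm_num) b
      rw [show (1:ℤ)+(-1:ℤ) = (0:ℤ) from by ring, show b+(0:ℤ) = b from by ring] at hk
      have hne : ((b:F)+2) ≠ 0 := by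
        have : ((b+2:ℤ):F) ≠ 0 := Int.cast_ne_zero.mpr (by omega)
        push_cast at this; exact this
      have h4 : ((b:F)+2) * c 0 b = 0 := by
        push_cast at hk
        linear_combination -hk + (b:F)*hjb + (b:F)*hm1
      rcases mul_eq_zero.mp h4 with h | h
      · exact absurd h hne
      · exact h
  intro i j
  by_cases hi : i = 0
  · subst hi
    rw [h0line j]
    push_cast
    ring
  · rw [hj i hi j, hall i]
end

section
/- Let F be a field of characteristic zero and let ℒ be the Lie algebra of Block type over F. In the ℒ-module A: (1) L_{i,j}·v_{0,−1} = 0 and L_{i,j}·v_{0,−2} = 0 for all i,j ∈ ℤ, so F·v_{0,−1} and F·v_{0,−2} are one-dimensional ℒ-submodules on which ℒ acts trivially; (2) for every (k,l) ∈ ℤ² with (k,l) ∉ {(0,−1),(0,−2)}, the ℒ-submodule generated by v_{k,l} is the whole module A. -/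
/-- Let `F` be a field of characteristic zero, `L` the Block type Lie
algebra over `F`, and let `V` be the `L`-module `A` (basis `{v_{k,l}}`, action
`L_{i,j}·v_{k,l} = ((j+1)k − (l+1)i) v_{i+k,j+l} + δ_{i+k,0}δ_{j+l,−2} i v_{0,−2}` for
`(k,l) ≠ (0,−2)` and `L_{i,j}·v_{0,−2} = 0`).  Then:
(1) `L_{i,j}·v_{0,−1} = 0` and `L_{i,j}·v_{0,−2} = 0` for all `i j`, so `F·v_{0,−1}` and
`F·v_{0,−2}` are one-dimensional `L`-submodules on which `L` acts trivially;
(2) for every `(k,l) ∉ {(0,−1),(0,−2)}`, the `L`-submodule generated by `v_{k,l}` is the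
whole module. -/
theorem block_module_A_structure
    (F : Type*) [Field F] [CharZero F]
    (L : Type*) [LieRing L] [LieAlgebra F L]
    (E : Module.Basis (ℤ × ℤ) F L)
    (hE : ∀ i j k l : ℤ, ⁅E (i, j), E (k, l)⁆ =
      (((j : F) + 1) * (k : F) - ((l : F) + 1) * (i : F)) • E (i + k, j + l))
    (V : Type*) [AddCommGroup V] [Module F V] [LieRingModule L V] [LieModule F L V]
    (v : Module.Basis (ℤ × ℤ) F V)
    (hgen : ∀ i j k l : ℤ, (k, l) ≠ ((0 : ℤ), (-2 : ℤ)) →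
      ⁅E (i, j), v (k, l)⁆ =
        (((j : F) + 1) * (k : F) - ((l : F) + 1) * (i : F)) • v (i + k, j + l)
          + (if i + k = 0 ∧ j + l = -2 then (i : F) else 0) • v ((0 : ℤ), (-2 : ℤ)))
    (h02 : ∀ i j : ℤ, ⁅E (i, j), v ((0 : ℤ), (-2 : ℤ))⁆ = 0) :
    (∀ i j : ℤ, ⁅E (i, j), v ((0 : ℤ), (-1 : ℤ))⁆ = 0 ∧
      ⁅E (i, j), v ((0 : ℤ), (-2 : ℤ))⁆ = 0) ∧
    (∃ N₁ : LieSubmodule F L V,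
      N₁.toSubmodule = Submodule.span F {v ((0 : ℤ), (-1 : ℤ))} ∧
      Module.rank F N₁.toSubmodule = 1 ∧
      ∀ x : L, ∀ m ∈ N₁, ⁅x, m⁆ = 0) ∧
    (∃ N₂ : LieSubmodule F L V,
      N₂.toSubmodule = Submodule.span F {v ((0 : ℤ), (-2 : ℤ))} ∧
      Module.rank F N₂.toSubmodule = 1 ∧
      ∀ x : L, ∀ m ∈ N₂, ⁅x, m⁆ = 0) ∧
    (∀ k l : ℤ, (k, l) ≠ ((0 : ℤ), (-1 : ℤ)) → (k, l) ≠ ((0 : ℤ), (-2 : ℤ)) →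
      LieSubmodule.lieSpan F L {v (k, l)} = ⊤) := by
  -- basic vanishing on basis elements of L
  have h01 : ∀ i j : ℤ, ⁅E (i, j), v ((0 : ℤ), (-1 : ℤ))⁆ = 0 := by
    intro i j
    rw [hgen i j 0 (-1) (by simp)]
    have : (((j : F) + 1) * ((0 : ℤ) : F) - (((-1 : ℤ) : F) + 1) * (i : F)) = 0 := by
      push_cast; ring
    rw [this, zero_smul, zero_add]
    split_ifs with h
    · have : i = 0 := by omega
      simp [this]
    · simp
  -- triviality of action on v(0,-1) and v(0,-2) for arbitrary x : L
  have keyfun : ∀ (w : V), (∀ i j : ℤ, ⁅E (i, j), w⁆ = 0) → ∀ x : L, ⁅x, w⁆ = 0 := by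
    intro w hw x
    have hx : x ∈ Submodule.span F (Set.range E) := by rw [E.span_eq]; trivial
    induction hx using Submodule.span_induction with
    | mem y hy => obtain ⟨⟨i, j⟩, rfl⟩ := hy; exact hw i j
    | zero => simp
    | add a b _ _ ha hb => rw [add_lie, ha, hb, add_zero]
    | smul c a _ ha => rw [smul_lie, ha, smul_zero]
  have tr1 : ∀ x : L, ⁅x, v ((0 : ℤ), (-1 : ℤ))⁆ = 0 := keyfun _ h01
  have tr2 : ∀ x : L, ⁅x, v ((0 : ℤ), (-2 : ℤ))⁆ = 0 := keyfun _ h02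
  -- trivial 1-dimensional submodules
  have mkN : ∀ (w : V), w ≠ 0 → (∀ x : L, ⁅x, w⁆ = 0) →
      ∃ N : LieSubmodule F L V, N.toSubmodule = Submodule.span F {w} ∧
        Module.rank F N.toSubmodule = 1 ∧ ∀ x : L, ∀ m ∈ N, ⁅x, m⁆ = 0 := by
    intro w hw htr
    have hzero : ∀ (x : L) (m : V), m ∈ Submodule.span F {w} → ⁅x, m⁆ = 0 := by
      intro x m hm
      obtain ⟨c, rfl⟩ := Submodule.mem_span_singleton.mp hm
      rw [lie_smul, htr, smul_zero]
    refine ⟨{ toSubmodule := Submodule.span F {w},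
              lie_mem := by intro x m hm; rw [hzero x m hm]; exact Submodule.zero_mem _ },
            rfl, ?_, fun x m hm => hzero x m hm⟩
    rw [rank_submodule_eq_one_iff]
    exact ⟨w, Submodule.mem_span_singleton_self w, hw, le_rfl⟩
  refine ⟨fun i j => ⟨h01 i j, h02 i j⟩,
    mkN _ (v.ne_zero _) tr1, mkN _ (v.ne_zero _) tr2, ?_⟩
  -- main part
  intro k l hkl1 hkl2
  set N := LieSubmodule.lieSpan F L {v (k, l)} with hN
  have base : v (k, l) ∈ N := LieSubmodule.subset_lieSpan rfl
  -- moving step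
  have step : ∀ a b m n : ℤ, v (a, b) ∈ N → (a, b) ≠ ((0 : ℤ), (-2 : ℤ)) →
      (m, n) ≠ ((0 : ℤ), (-2 : ℤ)) → (n + 2) * a - (b + 1) * m ≠ 0 → v (m, n) ∈ N := by
    intro a b m n hmem hab hmn hc
    have hb := hgen (m - a) (n - b) a b hab
    rw [show m - a + a = m by ring, show n - b + b = n by ring] at hb
    rw [if_neg (fun h => hmn (by rw [h.1, h.2]))] at hb
    rw [zero_smul, add_zero] at hb
    have hco : (((n - b : ℤ) : F) + 1) * (a : F) - ((b : F) + 1) * ((m - a : ℤ) : F)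
        = (((n + 2) * a - (b + 1) * m : ℤ) : F) := by push_cast; ring
    rw [hco] at hb
    have hcF : (((n + 2) * a - (b + 1) * m : ℤ) : F) ≠ 0 := Int.cast_ne_zero.mpr hc
    have hmem2 : (((n + 2) * a - (b + 1) * m : ℤ) : F) • v (m, n) ∈ N := by
      rw [← hb]; exact N.lie_mem hmem
    have := N.smul_mem (((n + 2) * a - (b + 1) * m : ℤ) : F)⁻¹ hmem2
    rwa [smul_smul, inv_mul_cancel₀ hcF, one_smul] at this
  -- reach v(1,0)
  have h10 : v (1, 0) ∈ N := by
    by_cases hc : (2 * k - (l + 1) : ℤ) = 0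
    · have hk : k ≠ 0 := by
        intro h; apply hkl1; rw [h]; congr 1; omega
      have h11 : v (1, 1) ∈ N := step k l 1 1 base hkl2 (by decide) (by omega)
      have h20 : v (2, 0) ∈ N := step 1 1 2 0 h11 (by decide) (by decide) (by decide)
      exact step 2 0 1 0 h20 (by decide) (by decide) (by decide)
    · exact step k l 1 0 base hkl2 (by decide) (by omega)
  have h11 : v (1, 1) ∈ N := step 1 0 1 1 h10 (by decide) (by decide) (by decide)
  -- reach v(0,-2)
  have h02' : v ((0 : ℤ), (-2 : ℤ)) ∈ N := by
    have hb := hgen (-1) (-2) 1 0 (by decide)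
    rw [show (-1 : ℤ) + 1 = 0 by ring, show (-2 : ℤ) + 0 = -2 by ring] at hb
    rw [if_pos ⟨rfl, rfl⟩] at hb
    have hco : ((((-2 : ℤ)) : F) + 1) * ((1 : ℤ) : F) - (((0 : ℤ) : F) + 1) * (((-1 : ℤ)) : F)
        = 0 := by push_cast; ring
    rw [hco, zero_smul, zero_add] at hb
    have hmem2 : (((-1 : ℤ)) : F) • v ((0 : ℤ), (-2 : ℤ)) ∈ N := by
      rw [← hb]; exact N.lie_mem h10
    have := N.smul_mem (((-1 : ℤ)) : F)⁻¹ hmem2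
    rwa [smul_smul, inv_mul_cancel₀ (by norm_num), one_smul] at this
  -- all basis vectors are in N
  have hall : ∀ p : ℤ × ℤ, v p ∈ N := by
    rintro ⟨m, n⟩
    by_cases h1 : (m, n) = ((0 : ℤ), (-2 : ℤ))
    · rw [h1]; exact h02'
    · have h1' : m ≠ 0 ∨ n ≠ -2 := by
        by_contra h; push_neg at h; exact h1 (by rw [h.1, h.2])
      by_cases h2 : m = n + 2
      · exact step 1 1 m n h11 (by decide) h1 (by omega)
      · exact step 1 0 m n h10 (by decide) h1 (by omega)
  -- conclude N = ⊤
  rw [eq_top_iff]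
  intro m _
  have hm : m ∈ Submodule.span F (Set.range v) := by rw [v.span_eq]; trivial
  have hle : Submodule.span F (Set.range v) ≤ N.toSubmodule := by
    rw [Submodule.span_le]
    rintro _ ⟨p, rfl⟩
    exact hall p
  exact hle hm
end

section
/- Let F be a field of characteristic zero and let ℒ be the Lie algebra of Block type over F. In the ℒ-module B: (1) the subspace W₃ spanned by {v_{k,l} | (k,l) ∉ {(0,−1),(0,−2)}} is an ℒ-submodule; (2) the ℒ-submodule generated by v_{0,−1} equals F·v_{0,−1} + W₃, and the ℒ-submodule generated by v_{0,−2} equals F·v_{0,−2} + W₃; in particular each of these generated submodules contains W₃. -/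
/-- Let `F` be a field of characteristic zero, `L` the Block type Lie
algebra over `F`, and let `V` be the `L`-module `B`.  Then:
(1) the subspace `W₃` spanned by `{v_{k,l} | (k,l) ∉ {(0,−1),(0,−2)}}` is an
`L`-submodule;
(2) the `L`-submodule generated by `v_{0,−1}` equals `F·v_{0,−1} + W₃` and the
`L`-submodule generated by `v_{0,−2}` equals `F·v_{0,−2} + W₃`; in particular each of
these generated submodules contains `W₃`. -/
theorem block_module_B_structure
    (F : Type*) [Field F] [CharZero F]
    (L : Type*) [LieRing L] [LieAlgebra F L]
    (E : Module.Basis (ℤ × ℤ) F L)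
    (hE : ∀ i j k l : ℤ, ⁅E (i, j), E (k, l)⁆ =
      (((j : F) + 1) * (k : F) - ((l : F) + 1) * (i : F)) • E (i + k, j + l))
    (V : Type*) [AddCommGroup V] [Module F V] [LieRingModule L V] [LieModule F L V]
    (v : Module.Basis (ℤ × ℤ) F V)
    (hgen : ∀ i j k l : ℤ, (k, l) ≠ ((0 : ℤ), (-1 : ℤ)) → (k, l) ≠ ((0 : ℤ), (-2 : ℤ)) →
        (i + k, j + l) ≠ ((0 : ℤ), (-1 : ℤ)) →
      ⁅E (i, j), v (k, l)⁆ =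
        (((j : F) + 1) * (k : F) - ((l : F) + 1) * (i : F)) • v (i + k, j + l))
    (hz : ∀ i j : ℤ, ⁅E (i, j), v (-i, -j - 1)⁆ = 0)
    (h01 : ∀ i j : ℤ, ⁅E (i, j), v ((0 : ℤ), (-1 : ℤ))⁆ = (i : F) • v (i, j - 1))
    (h02 : ∀ i j : ℤ, ⁅E (i, j), v ((0 : ℤ), (-2 : ℤ))⁆ = (i : F) • v (i, j - 2)) :
    (∃ N₃ : LieSubmodule F L V,
      N₃.toSubmodule = Submodule.span F
        {x | ∃ k l : ℤ, (k, l) ≠ ((0 : ℤ), (-1 : ℤ)) ∧ (k, l) ≠ ((0 : ℤ), (-2 : ℤ)) ∧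
          x = v (k, l)}) ∧
    (LieSubmodule.lieSpan F L {v ((0 : ℤ), (-1 : ℤ))}).toSubmodule =
      Submodule.span F {v ((0 : ℤ), (-1 : ℤ))} ⊔ Submodule.span F
        {x | ∃ k l : ℤ, (k, l) ≠ ((0 : ℤ), (-1 : ℤ)) ∧ (k, l) ≠ ((0 : ℤ), (-2 : ℤ)) ∧
          x = v (k, l)} ∧
    (LieSubmodule.lieSpan F L {v ((0 : ℤ), (-2 : ℤ))}).toSubmodule =
      Submodule.span F {v ((0 : ℤ), (-2 : ℤ))} ⊔ Submodule.span F
        {x | ∃ k l : ℤ, (k, l) ≠ ((0 : ℤ), (-1 : ℤ)) ∧ (k, l) ≠ ((0 : ℤ), (-2 : ℤ)) ∧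
          x = v (k, l)} ∧
    Submodule.span F
        {x | ∃ k l : ℤ, (k, l) ≠ ((0 : ℤ), (-1 : ℤ)) ∧ (k, l) ≠ ((0 : ℤ), (-2 : ℤ)) ∧
          x = v (k, l)} ≤
      (LieSubmodule.lieSpan F L {v ((0 : ℤ), (-1 : ℤ))}).toSubmodule ∧
    Submodule.span F
        {x | ∃ k l : ℤ, (k, l) ≠ ((0 : ℤ), (-1 : ℤ)) ∧ (k, l) ≠ ((0 : ℤ), (-2 : ℤ)) ∧
          x = v (k, l)} ≤
      (LieSubmodule.lieSpan F L {v ((0 : ℤ), (-2 : ℤ))}).toSubmodule := by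
  classical
  set S : Set V := {x | ∃ k l : ℤ, (k, l) ≠ ((0 : ℤ), (-1 : ℤ)) ∧
      (k, l) ≠ ((0 : ℤ), (-2 : ℤ)) ∧ x = v (k, l)} with hS
  set W : Submodule F V := Submodule.span F S with hWdef
  have hvS : ∀ k l : ℤ, (k, l) ≠ ((0 : ℤ), (-1 : ℤ)) → (k, l) ≠ ((0 : ℤ), (-2 : ℤ)) →
      v (k, l) ∈ W := fun k l h1 h2 => Submodule.subset_span ⟨k, l, h1, h2, rfl⟩
  -- bracket of a basis element of L with a basis element of S lands in W
  have key : ∀ i j k l : ℤ, (k, l) ≠ ((0 : ℤ), (-1 : ℤ)) → (k, l) ≠ ((0 : ℤ), (-2 : ℤ)) →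
      ⁅E (i, j), v (k, l)⁆ ∈ W := by
    intro i j k l h1 h2
    by_cases hc : (i + k, j + l) = ((0 : ℤ), (-1 : ℤ))
    · rw [Prod.mk.injEq] at hc
      have hk : k = -i := by omega
      have hl : l = -j - 1 := by omega
      subst hk; subst hl
      rw [hz]; exact W.zero_mem
    · by_cases hc2 : (i + k, j + l) = ((0 : ℤ), (-2 : ℤ))
      · rw [Prod.mk.injEq] at hc2
        have hk : k = -i := by omega
        have hl : l = -j - 2 := by omega
        subst hk; subst hl
        rw [hgen i j _ _ h1 h2 hc]
        have : ((j : F) + 1) * ((-i : ℤ) : F) - (((-j - 2 : ℤ) : F) + 1) * (i : F) = 0 := by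
          push_cast; ring
        rw [this, zero_smul]; exact W.zero_mem
      · rw [hgen i j k l h1 h2 hc]
        exact W.smul_mem _ (hvS _ _ hc hc2)
  -- for any x : L and any element of a set T with good bracket behaviour, reduce to basis elems
  have keyL : ∀ (w : V), (∀ i j : ℤ, ⁅E (i, j), w⁆ ∈ W) → ∀ x : L, ⁅x, w⁆ ∈ W := by
    intro w hw x
    have hx : x ∈ Submodule.span F (Set.range E) := by rw [Module.Basis.span_eq]; trivial
    induction hx using Submodule.span_induction with
    | mem y hy => obtain ⟨⟨i, j⟩, rfl⟩ := hy; exact hw i j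
    | zero => rw [zero_lie]; exact W.zero_mem
    | add y z _ _ ihy ihz => rw [add_lie]; exact W.add_mem ihy ihz
    | smul a y _ ih => rw [smul_lie]; exact W.smul_mem a ih
  have keyW : ∀ (x : L) (w : V), w ∈ W → ⁅x, w⁆ ∈ W := by
    intro x w hw
    induction hw using Submodule.span_induction with
    | mem y hy =>
      obtain ⟨k, l, h1, h2, rfl⟩ := hy
      exact keyL _ (fun i j => key i j k l h1 h2) x
    | zero => rw [lie_zero]; exact W.zero_mem
    | add y z _ _ ihy ihz => rw [lie_add]; exact W.add_mem ihy ihz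
    | smul a y _ ih => rw [lie_smul]; exact W.smul_mem a ih
  -- bracket with v(0,-1) and v(0,-2) lands in W
  have lie01W : ∀ x : L, ⁅x, v ((0 : ℤ), (-1 : ℤ))⁆ ∈ W := by
    refine keyL _ (fun i j => ?_)
    by_cases hi : i = 0
    · subst hi; rw [h01]; simp
    · rw [h01]
      refine W.smul_mem _ (hvS i (j - 1) ?_ ?_) <;>
        · intro h; exact hi (Prod.ext_iff.mp h).1
  have lie02W : ∀ x : L, ⁅x, v ((0 : ℤ), (-2 : ℤ))⁆ ∈ W := by
    refine keyL _ (fun i j => ?_)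
    by_cases hi : i = 0
    · subst hi; rw [h02]; simp
    · rw [h02]
      refine W.smul_mem _ (hvS i (j - 2) ?_ ?_) <;>
        · intro h; exact hi (Prod.ext_iff.mp h).1
  -- the candidate Lie submodules F·v + W
  have mkM : ∀ u : V, (∀ x : L, ⁅x, u⁆ ∈ W) →
      ∃ M : LieSubmodule F L V, M.toSubmodule = Submodule.span F {u} ⊔ W := by
    intro u hu
    refine ⟨{ Submodule.span F {u} ⊔ W with lie_mem := ?_ }, rfl⟩
    intro x m hm
    have hm' : m ∈ Submodule.span F {u} ⊔ W := hm
    clear hm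
    rw [Submodule.mem_sup] at hm'
    rename' hm' => hm
    obtain ⟨p, hp, q, hq, rfl⟩ := hm
    obtain ⟨a, rfl⟩ := Submodule.mem_span_singleton.mp hp
    show ⁅x, a • u + q⁆ ∈ Submodule.span F {u} ⊔ W
    rw [lie_add, lie_smul]
    exact add_mem (Submodule.mem_sup_right (W.smul_mem a (hu x)))
      (Submodule.mem_sup_right (keyW x q hq))
  obtain ⟨M₁, hM₁⟩ := mkM _ lie01W
  obtain ⟨M₂, hM₂⟩ := mkM _ lie02W
  -- generic lemma: if a Lie submodule contains all v(i,j) with i ≠ 0, then it contains W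
  have genW : ∀ N : LieSubmodule F L V, (∀ i j : ℤ, i ≠ 0 → v (i, j) ∈ N) →
      W ≤ N.toSubmodule := by
    intro N hN
    rw [hWdef]
    refine Submodule.span_le.mpr ?_
    rintro x ⟨k, l, h1, h2, rfl⟩
    by_cases hk : k = 0
    · subst hk
      have hl1 : l ≠ -1 := fun h => h1 (by rw [h])
      have hl2 : l ≠ -2 := fun h => h2 (by rw [h])
      have hm1 : v ((-1 : ℤ), (0 : ℤ)) ∈ N := hN (-1) 0 (by norm_num)
      have h := N.lie_mem (x := E (1, l)) hm1
      rw [hgen 1 l (-1) 0 (by decide) (by decide)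
        (by intro hcon; rw [Prod.mk.injEq] at hcon; omega)] at h
      have hco : ((l : F) + 1) * ((-1 : ℤ) : F) - (((0 : ℤ) : F) + 1) * ((1 : ℤ) : F) =
          -(((l + 2 : ℤ) : F)) := by push_cast; ring
      rw [hco] at h
      have hne : ((l + 2 : ℤ) : F) ≠ 0 := Int.cast_ne_zero.mpr (by omega)
      have h' := N.smul_mem (-(((l + 2 : ℤ) : F)))⁻¹ h
      rw [inv_smul_smul₀ (neg_ne_zero.mpr hne)] at h'
      simpa using h'
    · exact hN k l hk
  set N₁ := LieSubmodule.lieSpan F L {v ((0 : ℤ), (-1 : ℤ))} with hN₁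
  set N₂ := LieSubmodule.lieSpan F L {v ((0 : ℤ), (-2 : ℤ))} with hN₂
  have hv01 : v ((0 : ℤ), (-1 : ℤ)) ∈ N₁ := LieSubmodule.subset_lieSpan rfl
  have hv02 : v ((0 : ℤ), (-2 : ℤ)) ∈ N₂ := LieSubmodule.subset_lieSpan rfl
  have hN₁i : ∀ i j : ℤ, i ≠ 0 → v (i, j) ∈ N₁ := by
    intro i j hi
    have h := N₁.lie_mem (x := E (i, j + 1)) hv01
    rw [h01] at h
    have hj : j + 1 - 1 = j := by ring
    rw [hj] at h
    have hne : (i : F) ≠ 0 := Int.cast_ne_zero.mpr hi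
    have h' := N₁.smul_mem (i : F)⁻¹ h
    rwa [inv_smul_smul₀ hne] at h'
  have hN₂i : ∀ i j : ℤ, i ≠ 0 → v (i, j) ∈ N₂ := by
    intro i j hi
    have h := N₂.lie_mem (x := E (i, j + 2)) hv02
    rw [h02] at h
    have hj : j + 2 - 2 = j := by ring
    rw [hj] at h
    have hne : (i : F) ≠ 0 := Int.cast_ne_zero.mpr hi
    have h' := N₂.smul_mem (i : F)⁻¹ h
    rwa [inv_smul_smul₀ hne] at h'
  have hWN₁ : W ≤ N₁.toSubmodule := genW N₁ hN₁i
  have hWN₂ : W ≤ N₂.toSubmodule := genW N₂ hN₂i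
  have hle₁ : N₁ ≤ M₁ := by
    refine LieSubmodule.lieSpan_le.mpr ?_
    rintro x rfl
    exact (hM₁ ▸ Submodule.mem_sup_left (Submodule.mem_span_singleton_self _) :
      v ((0 : ℤ), (-1 : ℤ)) ∈ M₁.toSubmodule)
  have hle₂ : N₂ ≤ M₂ := by
    refine LieSubmodule.lieSpan_le.mpr ?_
    rintro x rfl
    exact (hM₂ ▸ Submodule.mem_sup_left (Submodule.mem_span_singleton_self _) :
      v ((0 : ℤ), (-2 : ℤ)) ∈ M₂.toSubmodule)
  have heq₁ : N₁.toSubmodule = Submodule.span F {v ((0 : ℤ), (-1 : ℤ))} ⊔ W := by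
    refine le_antisymm (hM₁ ▸ hle₁) (sup_le ?_ hWN₁)
    exact Submodule.span_le.mpr (by rintro x rfl; exact hv01)
  have heq₂ : N₂.toSubmodule = Submodule.span F {v ((0 : ℤ), (-2 : ℤ))} ⊔ W := by
    refine le_antisymm (hM₂ ▸ hle₂) (sup_le ?_ hWN₂)
    exact Submodule.span_le.mpr (by rintro x rfl; exact hv02)
  exact ⟨⟨{ W with lie_mem := fun {x m} hm => keyW x m hm }, rfl⟩,
    heq₁, heq₂, hWN₁, hWN₂⟩
end

section
/- Let F be a field of characteristic zero and let ℒ be the Lie algebra of Block type over F. In the ℒ-module C: (1) L_{i,j}·v_{0,−2} = 0 for all i,j ∈ ℤ, so F·v_{0,−2} is a one-dimensional ℒ-submodule on which ℒ acts trivially; (2) the subspace spanned by {v_{k,l} | (k,l) ≠ (0,−1)} is an ℒ-submodule; (3) the ℒ-submodule generated by v_{0,−1} is the whole module C. -/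
/-- Let `F` be a field of characteristic zero, `L` the Block type Lie
algebra over `F`, and let `V` be the `L`-module `C`.  Then:
(1) `L_{i,j}·v_{0,−2} = 0` for all `i j`, so `F·v_{0,−2}` is a one-dimensional
`L`-submodule on which `L` acts trivially;
(2) the subspace spanned by `{v_{k,l} | (k,l) ≠ (0,−1)}` is an `L`-submodule;
(3) the `L`-submodule generated by `v_{0,−1}` is the whole module. -/
theorem block_module_C_structure
    (F : Type*) [Field F] [CharZero F]
    (L : Type*) [LieRing L] [LieAlgebra F L]
    (E : Module.Basis (ℤ × ℤ) F L)
    (hE : ∀ i j k l : ℤ, ⁅E (i, j), E (k, l)⁆ =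
      (((j : F) + 1) * (k : F) - ((l : F) + 1) * (i : F)) • E (i + k, j + l))
    (V : Type*) [AddCommGroup V] [Module F V] [LieRingModule L V] [LieModule F L V]
    (v : Module.Basis (ℤ × ℤ) F V)
    (hgen : ∀ i j k l : ℤ, (k, l) ≠ ((0 : ℤ), (-1 : ℤ)) → (k, l) ≠ ((0 : ℤ), (-2 : ℤ)) →
        (i + k, j + l) ≠ ((0 : ℤ), (-1 : ℤ)) →
      ⁅E (i, j), v (k, l)⁆ =
        (((j : F) + 1) * (k : F) - ((l : F) + 1) * (i : F)) • v (i + k, j + l)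
          + (if i + k = 0 ∧ j + l = -2 then (i : F) else 0) • v ((0 : ℤ), (-2 : ℤ)))
    (hz : ∀ i j : ℤ, ⁅E (i, j), v (-i, -j - 1)⁆ = 0)
    (h01 : ∀ i j : ℤ, ⁅E (i, j), v ((0 : ℤ), (-1 : ℤ))⁆ = (i : F) • v (i, j - 1))
    (h02 : ∀ i j : ℤ, ⁅E (i, j), v ((0 : ℤ), (-2 : ℤ))⁆ = 0) :
    (∀ i j : ℤ, ⁅E (i, j), v ((0 : ℤ), (-2 : ℤ))⁆ = 0) ∧
    (∃ N₂ : LieSubmodule F L V,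
      N₂.toSubmodule = Submodule.span F {v ((0 : ℤ), (-2 : ℤ))} ∧
      Module.rank F N₂.toSubmodule = 1 ∧
      ∀ x : L, ∀ m ∈ N₂, ⁅x, m⁆ = 0) ∧
    (∃ N₃ : LieSubmodule F L V,
      N₃.toSubmodule = Submodule.span F
        {x | ∃ k l : ℤ, (k, l) ≠ ((0 : ℤ), (-1 : ℤ)) ∧ x = v (k, l)}) ∧
    LieSubmodule.lieSpan F L {v ((0 : ℤ), (-1 : ℤ))} = ⊤ := by

  classical
  -- Generalize the action on `v (0,-2)` to all of `L`.
  have hxv02 : ∀ x : L, ⁅x, v ((0 : ℤ), (-2 : ℤ))⁆ = 0 := by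
    intro x
    have hx : x ∈ Submodule.span F (Set.range E) := by
      rw [E.span_eq]; trivial
    induction hx using Submodule.span_induction with
    | mem y hy =>
      obtain ⟨⟨i, j⟩, rfl⟩ := hy
      exact h02 i j
    | zero => simp
    | add a b _ _ ha hb => rw [add_lie, ha, hb, add_zero]
    | smul c a _ ha => rw [smul_lie, ha, smul_zero]
  -- the trivial one-dimensional submodule
  have hlie2 : ∀ (x : L), ∀ m ∈ Submodule.span F {v ((0 : ℤ), (-2 : ℤ))},
      ⁅x, m⁆ = 0 := by
    intro x m hm
    obtain ⟨c, rfl⟩ := Submodule.mem_span_singleton.mp hm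
    rw [lie_smul, hxv02, smul_zero]
  refine ⟨h02, ⟨⟨Submodule.span F {v ((0 : ℤ), (-2 : ℤ))}, ?_⟩, rfl,
      Module.rank_eq_one_iff_finrank_eq_one.mpr (finrank_span_singleton (v.ne_zero _)),
      fun x m hm => hlie2 x m hm⟩, ?_, ?_⟩
  · intro x m hm
    rw [hlie2 x m hm]
    exact Submodule.zero_mem _
  · -- the submodule spanned by all v (k,l) with (k,l) ≠ (0,-1)
    set T : Set V := {x | ∃ k l : ℤ, (k, l) ≠ ((0 : ℤ), (-1 : ℤ)) ∧ x = v (k, l)} with hT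
    have hbasis : ∀ i j k l : ℤ, (k, l) ≠ ((0 : ℤ), (-1 : ℤ)) →
        ⁅E (i, j), v (k, l)⁆ ∈ Submodule.span F T := by
      intro i j k l hkl
      by_cases h2 : (k, l) = ((0 : ℤ), (-2 : ℤ))
      · rw [h2, h02]; exact Submodule.zero_mem _
      by_cases h3 : (i + k, j + l) = ((0 : ℤ), (-1 : ℤ))
      · have hk : k = -i := by
          have := congrArg Prod.fst h3; simp at this; omega
        have hl : l = -j - 1 := by
          have := congrArg Prod.snd h3; simp at this; omega
        rw [hk, hl, hz i j]
        exact Submodule.zero_mem _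
      · rw [hgen i j k l hkl h2 h3]
        refine Submodule.add_mem _ (Submodule.smul_mem _ _ ?_) (Submodule.smul_mem _ _ ?_)
        · exact Submodule.subset_span ⟨i + k, j + l, h3, rfl⟩
        · exact Submodule.subset_span ⟨0, -2, by simp, rfl⟩
    have hE' : ∀ i j : ℤ, ∀ m ∈ Submodule.span F T,
        ⁅E (i, j), m⁆ ∈ Submodule.span F T := by
      intro i j m hm
      induction hm using Submodule.span_induction with
      | mem y hy =>
        obtain ⟨k, l, hkl, rfl⟩ := hy
        exact hbasis i j k l hkl
      | zero => simp
      | add a b _ _ ha hb => rw [lie_add]; exact Submodule.add_mem _ ha hb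
      | smul c a _ ha => rw [lie_smul]; exact Submodule.smul_mem _ _ ha
    refine ⟨⟨Submodule.span F T, ?_⟩, rfl⟩
    intro x m hm
    have hx : x ∈ Submodule.span F (Set.range E) := by
      rw [E.span_eq]; trivial
    induction hx using Submodule.span_induction with
    | mem y hy =>
      obtain ⟨⟨i, j⟩, rfl⟩ := hy
      exact hE' i j m hm
    | zero => simp
    | add a b _ _ ha hb => rw [add_lie]; exact Submodule.add_mem _ ha hb
    | smul c a _ ha => rw [smul_lie]; exact Submodule.smul_mem _ _ ha
  · -- the submodule generated by v (0,-1) is everything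
    set N := LieSubmodule.lieSpan F L {v ((0 : ℤ), (-1 : ℤ))} with hN
    have h01m : v ((0 : ℤ), (-1 : ℤ)) ∈ N := LieSubmodule.subset_lieSpan rfl
    have hk0 : ∀ k l : ℤ, k ≠ 0 → v (k, l) ∈ N := by
      intro k l hk
      have : ⁅E (k, l + 1), v ((0 : ℤ), (-1 : ℤ))⁆ ∈ N := N.lie_mem h01m
      rw [h01 k (l + 1)] at this
      have hkF : (k : F) ≠ 0 := Int.cast_ne_zero.mpr hk
      have := N.smul_mem (k : F)⁻¹ this
      rw [inv_smul_smul₀ hkF] at this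
      simpa using this
    have h02m : v ((0 : ℤ), (-2 : ℤ)) ∈ N := by
      have hb : ⁅E (1, 0), v ((-1 : ℤ), (-2 : ℤ))⁆ ∈ N := N.lie_mem (hk0 (-1) (-2) (by norm_num))
      rw [hgen 1 0 (-1) (-2) (by decide) (by decide) (by decide)] at hb
      norm_num at hb
      simpa using hb
    have h0m : ∀ m : ℤ, v ((0 : ℤ), m) ∈ N := by
      intro m
      rcases eq_or_ne m (-1) with rfl | hm1
      · exact h01m
      rcases eq_or_ne m (-2) with rfl | hm2
      · exact h02m
      have hb : ⁅E (1, m), v ((-1 : ℤ), (0 : ℤ))⁆ ∈ N := N.lie_mem (hk0 (-1) 0 (by norm_num))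
      rw [hgen 1 m (-1) 0 (by decide) (by decide) (by simp; omega)] at hb
      have hidx : ((1:ℤ) + -1, m + 0) = ((0:ℤ), m) := by norm_num
      rw [hidx, if_neg (by omega : ¬((1:ℤ) + -1 = 0 ∧ m + 0 = -2)), zero_smul, add_zero] at hb
      have hc : ((m:F) + 1) * ((-1:ℤ):F) - (((0:ℤ):F) + 1) * ((1:ℤ):F) ≠ 0 := by
        push_cast
        intro h
        apply hm2
        have hmc : (m:F) = ((-2:ℤ):F) := by push_cast; linear_combination -h
        exact_mod_cast hmc
      have hb2 := N.smul_mem (((m:F) + 1) * ((-1:ℤ):F) - (((0:ℤ):F) + 1) * ((1:ℤ):F))⁻¹ hb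
      rw [inv_smul_smul₀ hc] at hb2
      exact hb2
    have hall : ∀ p : ℤ × ℤ, v p ∈ N := by
      rintro ⟨k, l⟩
      rcases eq_or_ne k 0 with rfl | hk
      · exact h0m l
      · exact hk0 k l hk
    rw [eq_top_iff]
    intro x _
    have hx : x ∈ Submodule.span F (Set.range v) := by rw [v.span_eq]; trivial
    have : Submodule.span F (Set.range v) ≤ N.toSubmodule := by
      rw [Submodule.span_le]
      rintro _ ⟨p, rfl⟩
      exact hall p
    exact this hx
end
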